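/- arXiv:2403.02659 — 10 statements merged into one kernel-verified Lean document; each statement's English description precedes it below -/
import Mathlib

section
/- Let S be a compact subset of the probability simplex {γ ∈ ℝ³ : γ_i ≥ 0, γ₁+γ₂+γ₃ = 1} such that for every γ ∈ S and every i ∈ {1,2,3}, γ_i ≠ 0 and γ_i ≠ 2/3. Then there exists δ > 0 such that for every γ ∈ S, every 3×2 row-stochastic matrix P^A and every 2×3 row-stochastic matrix P^B, one has max{ (1/3)·∑_{i=1}^{3} (P^A P^B)(i,i), max_{k=1,2,3} |γ_k − (1/3)·∑_{i=1}^{3} (P^A P^B)(i,k)| } ≥ δ. -/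
open Finset

/-- A real matrix is row-stochastic if all entries are nonnegative and each row sums to 1. -/
def RowStochastic {m n : ℕ} (P : Matrix (Fin m) (Fin n) ℝ) : Prop :=
  (∀ i j, 0 ≤ P i j) ∧ ∀ i, ∑ j, P i j = 1


lemma helper23 (a0 a1 a2 c0 c1 c2 p q g : ℝ)
    (hg : g = (1/3) * ((a0*p + c0*q) + (a1*p + c1*q) + (a2*p + c2*q)))
    (hp : p = 0) (hc0 : c0 = 0) (hq : q = 1) (h1 : c1 = 1) (h2 : c2 = 1) : g = 2/3 := by
  subst hp hc0 hq h1 h2; linear_combination hg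

lemma key_scalar
    (a00 a01 a10 a11 a20 a21 b00 b01 b02 b10 b11 b12 g0 g1 g2 : ℝ)
    (na00 : 0 ≤ a00) (na01 : 0 ≤ a01) (na10 : 0 ≤ a10) (na11 : 0 ≤ a11)
    (na20 : 0 ≤ a20) (na21 : 0 ≤ a21)
    (nb00 : 0 ≤ b00) (nb01 : 0 ≤ b01) (nb02 : 0 ≤ b02)
    (nb10 : 0 ≤ b10) (nb11 : 0 ≤ b11) (nb12 : 0 ≤ b12)
    (hA0 : a00 + a01 = 1) (hA1 : a10 + a11 = 1) (hA2 : a20 + a21 = 1)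
    (hB0 : b00 + b01 + b02 = 1) (hB1 : b10 + b11 + b12 = 1)
    (hd0 : a00 * b00 + a01 * b10 = 0)
    (hd1 : a10 * b01 + a11 * b11 = 0)
    (hd2 : a20 * b02 + a21 * b12 = 0)
    (hg0 : g0 = (1/3) * ((a00*b00 + a01*b10) + (a10*b00 + a11*b10) + (a20*b00 + a21*b10)))
    (hg1 : g1 = (1/3) * ((a00*b01 + a01*b11) + (a10*b01 + a11*b11) + (a20*b01 + a21*b11)))
    (hg2 : g2 = (1/3) * ((a00*b02 + a01*b12) + (a10*b02 + a11*b12) + (a20*b02 + a21*b12)))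
    (h0 : g0 ≠ 0 ∧ g0 ≠ 2/3) (h1 : g1 ≠ 0 ∧ g1 ≠ 2/3) (h2 : g2 ≠ 0 ∧ g2 ≠ 2/3) : False := by
  -- each product in the diagonal conditions vanishes
  have p00 : a00 * b00 = 0 := by linarith [mul_nonneg na00 nb00, mul_nonneg na01 nb10]
  have p01 : a01 * b10 = 0 := by linarith [mul_nonneg na00 nb00, mul_nonneg na01 nb10]
  have p10 : a10 * b01 = 0 := by linarith [mul_nonneg na10 nb01, mul_nonneg na11 nb11]
  have p11 : a11 * b11 = 0 := by linarith [mul_nonneg na10 nb01, mul_nonneg na11 nb11]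
  have p20 : a20 * b02 = 0 := by linarith [mul_nonneg na20 nb02, mul_nonneg na21 nb12]
  have p21 : a21 * b12 = 0 := by linarith [mul_nonneg na20 nb02, mul_nonneg na21 nb12]
  -- per-index dichotomy
  have E0 : (b00 = 0 ∧ a01 = 0) ∨ (b10 = 0 ∧ a00 = 0) := by
    rcases mul_eq_zero.mp p00 with h | h <;> rcases mul_eq_zero.mp p01 with h' | h'
    · exact absurd hA0 (by rw [h, h']; norm_num)
    · exact Or.inr ⟨h', h⟩
    · exact Or.inl ⟨h, h'⟩
    · exact absurd (h0.1) (by push_neg; linear_combination hg0 + (1/3)*(a00+a10+a20)*h + (1/3)*(a01+a11+a21)*h')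
  have E1 : (b01 = 0 ∧ a11 = 0) ∨ (b11 = 0 ∧ a10 = 0) := by
    rcases mul_eq_zero.mp p10 with h | h <;> rcases mul_eq_zero.mp p11 with h' | h'
    · exact absurd hA1 (by rw [h, h']; norm_num)
    · exact Or.inr ⟨h', h⟩
    · exact Or.inl ⟨h, h'⟩
    · exact absurd (h1.1) (by push_neg; linear_combination hg1 + (1/3)*(a00+a10+a20)*h + (1/3)*(a01+a11+a21)*h')
  have E2 : (b02 = 0 ∧ a21 = 0) ∨ (b12 = 0 ∧ a20 = 0) := by
    rcases mul_eq_zero.mp p20 with h | h <;> rcases mul_eq_zero.mp p21 with h' | h'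
    · exact absurd hA2 (by rw [h, h']; norm_num)
    · exact Or.inr ⟨h', h⟩
    · exact Or.inl ⟨h, h'⟩
    · exact absurd (h2.1) (by push_neg; linear_combination hg2 + (1/3)*(a00+a10+a20)*h + (1/3)*(a01+a11+a21)*h')
  rcases E0 with ⟨e0b, e0a⟩ | ⟨e0b, e0a⟩ <;> rcases E1 with ⟨e1b, e1a⟩ | ⟨e1b, e1a⟩ <;>
    rcases E2 with ⟨e2b, e2a⟩ | ⟨e2b, e2a⟩
  · -- LLL : row 0 of PB sums to 0
    linarith
  · -- LLR : lone R at index 2, g2 = 2/3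
    exact h2.2 (helper23 a21 a01 a11 a20 a00 a10 b12 b02 g2
      (by linear_combination hg2) e2b e2a (by linarith) (by linarith) (by linarith))
  · -- LRL : lone R at index 1, g1 = 2/3
    exact h1.2 (helper23 a11 a01 a21 a10 a00 a20 b11 b01 g1
      (by linear_combination hg1) e1b e1a (by linarith) (by linarith) (by linarith))
  · -- LRR : lone L at index 0, g0 = 2/3
    exact h0.2 (helper23 a00 a10 a20 a01 a11 a21 b00 b10 g0
      (by linear_combination hg0) e0b e0a (by linarith) (by linarith) (by linarith))
  · -- RLL : lone R at index 0, g0 = 2/3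
    exact h0.2 (helper23 a01 a11 a21 a00 a10 a20 b10 b00 g0
      (by linear_combination hg0) e0b e0a (by linarith) (by linarith) (by linarith))
  · -- RLR : lone L at index 1, g1 = 2/3
    exact h1.2 (helper23 a10 a00 a20 a11 a01 a21 b01 b11 g1
      (by linear_combination hg1) e1b e1a (by linarith) (by linarith) (by linarith))
  · -- RRL : lone L at index 2, g2 = 2/3
    exact h2.2 (helper23 a20 a00 a10 a21 a01 a11 b02 b12 g2
      (by linear_combination hg2) e2b e2a (by linarith) (by linarith) (by linarith))
  · -- RRR : row 1 of PB sums to 0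
    linarith


noncomputable def Fq (p : (Fin 3 → ℝ) × Matrix (Fin 3) (Fin 2) ℝ × Matrix (Fin 2) (Fin 3) ℝ) : ℝ :=
  max ((1/3) * ∑ i, (p.2.1 * p.2.2) i i)
    (max (|p.1 0 - (1/3) * ∑ i, (p.2.1 * p.2.2) i 0|)
      (max (|p.1 1 - (1/3) * ∑ i, (p.2.1 * p.2.2) i 1|)
        (|p.1 2 - (1/3) * ∑ i, (p.2.1 * p.2.2) i 2|)))

lemma Fq_cont : Continuous Fq := by
  unfold Fq
  simp only [Matrix.mul_apply]
  fun_prop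

lemma sup3 (f : Fin 3 → ℝ) : univ.sup' univ_nonempty f = max (f 0) (max (f 1) (f 2)) := by
  have h : (univ : Finset (Fin 3)) = {0, 1, 2} := rfl
  simp [h, Finset.sup'_insert]

lemma Fq_eq (γ : Fin 3 → ℝ) (PA : Matrix (Fin 3) (Fin 2) ℝ) (PB : Matrix (Fin 2) (Fin 3) ℝ) :
    Fq (γ, PA, PB) = max ((1/3) * ∑ i, (PA * PB) i i)
      (Finset.univ.sup' Finset.univ_nonempty
        (fun k : Fin 3 => |γ k - (1/3) * ∑ i, (PA * PB) i k|)) := by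
  rw [sup3]; rfl

lemma Fq_pos (γ : Fin 3 → ℝ) (PA : Matrix (Fin 3) (Fin 2) ℝ) (PB : Matrix (Fin 2) (Fin 3) ℝ)
    (hγ : ∀ i, γ i ≠ 0 ∧ γ i ≠ 2/3) (hPA : RowStochastic PA) (hPB : RowStochastic PB) :
    0 < Fq (γ, PA, PB) := by
  by_contra hc
  push_neg at hc
  unfold Fq at hc
  have hQnn : ∀ i k, 0 ≤ (PA * PB) i k := fun i k => by
    rw [Matrix.mul_apply]
    exact Finset.sum_nonneg fun j _ => mul_nonneg (hPA.1 i j) (hPB.1 j k)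
  have ht : (1/3) * ∑ i, (PA * PB) i i ≤ 0 := le_trans (le_max_left _ _) hc
  have hdsum : ∑ i, (PA * PB) i i = 0 := by
    have : 0 ≤ ∑ i, (PA * PB) i i := Finset.sum_nonneg fun i _ => hQnn i i
    linarith
  have hd : ∀ i, (PA * PB) i i = 0 := by
    intro i
    have := (Finset.sum_eq_zero_iff_of_nonneg (fun i _ => hQnn i i)).mp hdsum
    exact this i (mem_univ i)
  have habs : ∀ k : Fin 3, γ k = (1/3) * ∑ i, (PA * PB) i k := by
    have h0 := le_trans (le_max_left _ _) (le_trans (le_max_right _ _) hc)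
    have h1 := le_trans (le_max_left _ _)
      (le_trans (le_max_right _ _) (le_trans (le_max_right _ _) hc))
    have h2 := le_trans (le_max_right _ _)
      (le_trans (le_max_right _ _) (le_trans (le_max_right _ _) hc))
    intro k
    fin_cases k
    · exact sub_eq_zero.mp (abs_nonpos_iff.mp h0)
    · exact sub_eq_zero.mp (abs_nonpos_iff.mp h1)
    · exact sub_eq_zero.mp (abs_nonpos_iff.mp h2)
  have mulexp : ∀ i k, (PA * PB) i k = PA i 0 * PB 0 k + PA i 1 * PB 1 k := fun i k => by
    rw [Matrix.mul_apply, Fin.sum_univ_two]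
  have hgexp : ∀ k, γ k = (1/3) * ((PA 0 0 * PB 0 k + PA 0 1 * PB 1 k) +
      (PA 1 0 * PB 0 k + PA 1 1 * PB 1 k) + (PA 2 0 * PB 0 k + PA 2 1 * PB 1 k)) := by
    intro k
    have := habs k
    rwa [Fin.sum_univ_three, mulexp, mulexp, mulexp] at this
  exact key_scalar (PA 0 0) (PA 0 1) (PA 1 0) (PA 1 1) (PA 2 0) (PA 2 1)
    (PB 0 0) (PB 0 1) (PB 0 2) (PB 1 0) (PB 1 1) (PB 1 2) (γ 0) (γ 1) (γ 2)
    (hPA.1 0 0) (hPA.1 0 1) (hPA.1 1 0) (hPA.1 1 1) (hPA.1 2 0) (hPA.1 2 1)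
    (hPB.1 0 0) (hPB.1 0 1) (hPB.1 0 2) (hPB.1 1 0) (hPB.1 1 1) (hPB.1 1 2)
    (by simpa [Fin.sum_univ_two] using hPA.2 0)
    (by simpa [Fin.sum_univ_two] using hPA.2 1)
    (by simpa [Fin.sum_univ_two] using hPA.2 2)
    (by simpa [Fin.sum_univ_three] using hPB.2 0)
    (by simpa [Fin.sum_univ_three] using hPB.2 1)
    (by rw [← mulexp]; exact hd 0)
    (by rw [← mulexp]; exact hd 1)
    (by rw [← mulexp]; exact hd 2)
    (hgexp 0) (hgexp 1) (hgexp 2) (hγ 0) (hγ 1) (hγ 2)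


lemma isCompact_rowStochastic (m n : ℕ) :
    IsCompact {P : Matrix (Fin m) (Fin n) ℝ | RowStochastic P} := by
  have hbig : IsCompact (Set.pi Set.univ fun _ : Fin m =>
      (Set.pi Set.univ fun _ : Fin n => Set.Icc (0:ℝ) 1) :
      Set (Matrix (Fin m) (Fin n) ℝ)) :=
    isCompact_univ_pi fun _ => isCompact_univ_pi fun _ => isCompact_Icc
  apply hbig.of_isClosed_subset
  · have : {P : Matrix (Fin m) (Fin n) ℝ | RowStochastic P} =
        (⋂ i, ⋂ j, {P : Matrix (Fin m) (Fin n) ℝ | 0 ≤ P i j}) ∩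
        ⋂ i, {P : Matrix (Fin m) (Fin n) ℝ | ∑ j, P i j = 1} := by
      ext P; simp only [RowStochastic, Set.mem_setOf_eq, Set.mem_inter_iff, Set.mem_iInter]
    rw [this]
    refine IsClosed.inter (isClosed_iInter fun i => isClosed_iInter fun j => ?_)
      (isClosed_iInter fun i => ?_)
    · exact isClosed_le continuous_const (continuous_id.matrix_elem i j)
    · exact isClosed_eq (by fun_prop) continuous_const
  · intro P hP i _ j _
    refine ⟨hP.1 i j, ?_⟩
    calc P i j ≤ ∑ j', P i j' :=
          Finset.single_le_sum (fun j' _ => hP.1 i j') (mem_univ j)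
      _ = 1 := hP.2 i

/-- **Proposition 1 (classical part, robust quantum advantage).** On a compact set `S` of
games in the probability simplex whose coordinates avoid `0` and `2/3`, the quality index
of every classical 1-bit strategy is uniformly bounded away from `0`. -/
theorem classical_quality_uniformly_bounded_below
    (S : Set (Fin 3 → ℝ)) (hS : IsCompact S)
    (hsimplex : ∀ γ ∈ S, (∀ i, 0 ≤ γ i) ∧ ∑ i, γ i = 1)
    (hne : ∀ γ ∈ S, ∀ i, γ i ≠ 0 ∧ γ i ≠ 2/3) :
    ∃ δ > 0, ∀ γ ∈ S, ∀ (PA : Matrix (Fin 3) (Fin 2) ℝ) (PB : Matrix (Fin 2) (Fin 3) ℝ),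
      RowStochastic PA → RowStochastic PB →
      δ ≤ max ((1/3) * ∑ i, (PA * PB) i i)
            (Finset.univ.sup' Finset.univ_nonempty
              (fun k : Fin 3 => |γ k - (1/3) * ∑ i, (PA * PB) i k|)) := by
  rcases S.eq_empty_or_nonempty with hSe | hSne
  · exact ⟨1, one_pos, fun γ hγ => absurd hγ (by simp [hSe])⟩
  have hK : IsCompact (S ×ˢ (({P | RowStochastic P} : Set (Matrix (Fin 3) (Fin 2) ℝ)) ×ˢ
      ({P | RowStochastic P} : Set (Matrix (Fin 2) (Fin 3) ℝ)))) :=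
    hS.prod ((isCompact_rowStochastic 3 2).prod (isCompact_rowStochastic 2 3))
  have hKne : (S ×ˢ (({P | RowStochastic P} : Set (Matrix (Fin 3) (Fin 2) ℝ)) ×ˢ
      ({P | RowStochastic P} : Set (Matrix (Fin 2) (Fin 3) ℝ)))).Nonempty := by
    obtain ⟨γ0, hγ0⟩ := hSne
    refine ⟨(γ0, (Matrix.of fun _ _ => (1:ℝ)/2), (Matrix.of fun _ _ => (1:ℝ)/3)),
      hγ0, ⟨fun i j => by norm_num, fun i => by simp [Fin.sum_univ_two]⟩,
      ⟨fun i j => by norm_num, fun i => by simp [Fin.sum_univ_three]⟩⟩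
  obtain ⟨x, hxK, hxmin⟩ := hK.exists_isMinOn hKne Fq_cont.continuousOn
  obtain ⟨hx1, hx2, hx3⟩ := hxK
  refine ⟨Fq x, Fq_pos x.1 x.2.1 x.2.2 (hne x.1 hx1) hx2 hx3, ?_⟩
  intro γ hγ PA PB hPA hPB
  rw [← Fq_eq]
  exact hxmin ⟨hγ, hPA, hPB⟩
end

section
/- Let γ ∈ ℝ³ be a probability vector (γ_i ≥ 0, γ₁+γ₂+γ₃ = 1). Suppose there exist a 3×2 row-stochastic matrix P^A and a 2×3 row-stochastic matrix P^B such that the 3×3 matrix V = P^A P^B satisfies V(i,i) = 0 for all i and (1/3)·∑_{i=1}^{3} V(i,k) = γ_k for all k. Then there exists an index j ∈ {1,2,3} with γ_j = 0 or γ_j = 2/3. -/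
open Finset

/-- **Necessity.** If a 3-restaurant game `H³(γ)` is perfectly winnable with one classical
bit — i.e. some 1-bit strategy `(PA, PB)` has visit matrix `V = PA * PB` with zero diagonal
and column averages `γ` — then some `γ_j ∈ {0, 2/3}`. -/
theorem classical_perfect_win_necessary
    (γ : Fin 3 → ℝ) (hγ0 : ∀ i, 0 ≤ γ i) (hγ1 : ∑ i, γ i = 1)
    (PA : Matrix (Fin 3) (Fin 2) ℝ) (PB : Matrix (Fin 2) (Fin 3) ℝ)
    (hPA : RowStochastic PA) (hPB : RowStochastic PB)
    (hdiag : ∀ i, (PA * PB) i i = 0)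
    (hcol : ∀ k, (1/3) * ∑ i, (PA * PB) i k = γ k) :
    ∃ j, γ j = 0 ∨ γ j = 2/3 := by
  obtain ⟨hA0, hA1⟩ := hPA
  obtain ⟨hB0, hB1⟩ := hPB
  -- row sums of PA
  have hArow : ∀ i, PA i 0 + PA i 1 = 1 := by
    intro i; have := hA1 i; simpa [Fin.sum_univ_two] using this
  have hBrow : ∀ r, PB r 0 + PB r 1 + PB r 2 = 1 := by
    intro r; have := hB1 r; simpa [Fin.sum_univ_three] using this
  -- diagonal conditions give vanishing products
  have hd : ∀ i, PA i 0 * PB 0 i = 0 ∧ PA i 1 * PB 1 i = 0 := by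
    intro i
    have h := hdiag i
    rw [Matrix.mul_apply] at h
    rw [Fin.sum_univ_two] at h
    have h1 : 0 ≤ PA i 0 * PB 0 i := mul_nonneg (hA0 i 0) (hB0 0 i)
    have h2 : 0 ≤ PA i 1 * PB 1 i := mul_nonneg (hA0 i 1) (hB0 1 i)
    constructor <;> linarith
  -- expand the column condition
  have hcol' : ∀ k : Fin 3, (1/3) * (PA 0 0 * PB 0 k + PA 0 1 * PB 1 k
      + (PA 1 0 * PB 0 k + PA 1 1 * PB 1 k)
      + (PA 2 0 * PB 0 k + PA 2 1 * PB 1 k)) = γ k := by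
    intro k
    have := hcol k
    rw [Fin.sum_univ_three] at this
    simp only [Matrix.mul_apply, Fin.sum_univ_two] at this
    linarith
  by_cases hboth : ∃ k : Fin 3, PB 0 k = 0 ∧ PB 1 k = 0
  · obtain ⟨k, hk0, hk1⟩ := hboth
    refine ⟨k, Or.inl ?_⟩
    have := hcol' k
    rw [hk0, hk1] at this
    linarith
  · push_neg at hboth
    -- for each i, structured alternative
    have key : ∀ i : Fin 3,
        (PB 0 i = 0 ∧ PA i 0 = 1 ∧ PA i 1 = 0) ∨
        (PB 1 i = 0 ∧ PA i 0 = 0 ∧ PA i 1 = 1) := by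
      intro i
      obtain ⟨h1, h2⟩ := hd i
      by_cases hp : PB 0 i = 0
      · left
        have hq : PB 1 i ≠ 0 := hboth i hp
        have ha1 : PA i 1 = 0 := by
          rcases mul_eq_zero.mp h2 with h | h
          · exact h
          · exact absurd h hq
        exact ⟨hp, by linarith [hArow i], ha1⟩
      · right
        have ha0 : PA i 0 = 0 := by
          rcases mul_eq_zero.mp h1 with h | h
          · exact h
          · exact absurd h hp
        have ha1 : PA i 1 = 1 := by linarith [hArow i]
        have hq : PB 1 i = 0 := by
          rcases mul_eq_zero.mp h2 with h | h
          · rw [ha1] at h; linarith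
          · exact h
        exact ⟨hq, ha0, ha1⟩
    rcases key 0 with ⟨b0, a00, a01⟩ | ⟨b0, a00, a01⟩ <;>
    rcases key 1 with ⟨b1, a10, a11⟩ | ⟨b1, a10, a11⟩ <;>
    rcases key 2 with ⟨b2, a20, a21⟩ | ⟨b2, a20, a21⟩
    · -- PB 0 ≡ 0 : contradiction with row sum
      exact absurd (hBrow 0) (by rw [b0, b1, b2]; norm_num)
    · -- S0 = {0,1}, S1 = {2} : γ 2 = 2/3
      refine ⟨2, Or.inr ?_⟩
      have hp2 : PB 0 2 = 1 := by have := hBrow 0; rw [b0, b1] at this; linarith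
      have := hcol' 2
      rw [hp2, b2, a00, a10, a20] at this
      linarith
    · -- S0 = {0,2}, S1 = {1}
      refine ⟨1, Or.inr ?_⟩
      have hp1 : PB 0 1 = 1 := by have := hBrow 0; rw [b0, b2] at this; linarith
      have := hcol' 1
      rw [hp1, b1, a00, a10, a20] at this
      linarith
    · -- S0 = {0}, S1 = {1,2}
      refine ⟨0, Or.inr ?_⟩
      have hq0 : PB 1 0 = 1 := by have := hBrow 1; rw [b1, b2] at this; linarith
      have := hcol' 0
      rw [hq0, b0, a01, a11, a21] at this
      linarith
    · -- S0 = {1,2}, S1 = {0}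
      refine ⟨0, Or.inr ?_⟩
      have hp0 : PB 0 0 = 1 := by have := hBrow 0; rw [b1, b2] at this; linarith
      have := hcol' 0
      rw [hp0, b0, a00, a10, a20] at this
      linarith
    · -- S0 = {1}, S1 = {0,2}
      refine ⟨1, Or.inr ?_⟩
      have hq1 : PB 1 1 = 1 := by have := hBrow 1; rw [b0, b2] at this; linarith
      have := hcol' 1
      rw [hq1, b1, a01, a11, a21] at this
      linarith
    · -- S0 = {2}, S1 = {0,1}
      refine ⟨2, Or.inr ?_⟩
      have hq2 : PB 1 2 = 1 := by have := hBrow 1; rw [b0, b1] at this; linarith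
      have := hcol' 2
      rw [hq2, b2, a01, a11, a21] at this
      linarith
    · -- PB 1 ≡ 0 : contradiction
      exact absurd (hBrow 1) (by rw [b0, b1, b2]; norm_num)
end

section
/- Let γ ∈ ℝ³ be a probability vector (γ_i ≥ 0, γ₁+γ₂+γ₃ = 1) with γ_i ≤ 2/3 for every i, and suppose there exists an index j with γ_j = 0 or γ_j = 2/3. Then there exist a 3×2 row-stochastic matrix P^A and a 2×3 row-stochastic matrix P^B such that the matrix V = P^A P^B satisfies V(i,i) = 0 for all i and (1/3)·∑_{i=1}^{3} V(i,k) = γ_k for all k. -/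
/-!
Relabelling the restaurants permutes the rows and columns of the visit matrix, so we may assume
`γ₀ ∈ {0, 2/3}`. If `γ₀ = 2/3`, Alice signals whether restaurant 0 is closed; Bob goes to
restaurant 0 otherwise, and to 1 or 2 with probabilities `3γ₁, 3γ₂` if it is. If `γ₀ = 0`, the
two messages send Bob to restaurants 1 and 2; Alice's choice is forced when one of them is
closed, and when 0 is closed she mixes so that the column averages come out as `γ₁, γ₂`
(possible exactly because `1/3 ≤ γ₁ ≤ 2/3`).
-/

open Finset

theorem RowStochastic.submatrix {k m n l : ℕ} {P : Matrix (Fin m) (Fin n) ℝ}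
    (hP : RowStochastic P) (e : Fin k → Fin m) (σ : Fin l ≃ Fin n) :
    RowStochastic (P.submatrix e σ) :=
  ⟨fun i j => hP.1 (e i) (σ j), fun i => (Equiv.sum_comp σ (P (e i))).trans (hP.2 (e i))⟩

/-- `m` is the number of messages Alice may send (`m = 2` for one bit); `PA * PB` is the visit
matrix. -/
def PerfectlyWinnable {n : ℕ} (m : ℕ) (γ : Fin n → ℝ) : Prop :=
  ∃ (PA : Matrix (Fin n) (Fin m) ℝ) (PB : Matrix (Fin m) (Fin n) ℝ),
    RowStochastic PA ∧ RowStochastic PB ∧ (∀ i, (PA * PB) i i = 0) ∧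
      ∀ k, 1 / (n : ℝ) * ∑ i, (PA * PB) i k = γ k

theorem PerfectlyWinnable.of_comp_perm {n m : ℕ} {γ : Fin n → ℝ} (σ : Equiv.Perm (Fin n))
    (h : PerfectlyWinnable m (γ ∘ σ)) : PerfectlyWinnable m γ := by
  obtain ⟨PA, PB, hA, hB, hdiag, hcol⟩ := h
  have hV := Matrix.submatrix_mul_equiv PA PB σ.symm (Equiv.refl (Fin m)) σ.symm
  refine ⟨_, _, hA.submatrix σ.symm (Equiv.refl _), hB.submatrix (Equiv.refl _) σ.symm,
    fun i => ?_, fun k => ?_⟩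
  · rw [hV]; exact hdiag _
  · rw [hV]
    simpa [Equiv.sum_comp σ.symm (fun i => (PA * PB) i (σ.symm k))] using hcol (σ.symm k)

theorem perfectlyWinnable_zero_left {b c : ℝ} (hb : b ≤ 2 / 3) (hc : c ≤ 2 / 3)
    (hbc : b + c = 1) :
    PerfectlyWinnable 2 ![0, b, c] := by
  refine ⟨!![3 * b - 1, 2 - 3 * b; 0, 1; 1, 0], !![0, 1, 0; 0, 0, 1],
    ⟨fun i j => ?_, fun i => ?_⟩, ⟨fun i j => ?_, fun i => ?_⟩, fun i => ?_, fun k => ?_⟩ <;>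
    (try fin_cases i) <;> (try fin_cases j) <;> (try fin_cases k) <;>
    norm_num [Matrix.mul_apply, Fin.sum_univ_succ] <;> linarith

theorem perfectlyWinnable_two_thirds_left {b c : ℝ} (hb : 0 ≤ b) (hc : 0 ≤ c)
    (hbc : b + c = 1 / 3) :
    PerfectlyWinnable 2 ![2 / 3, b, c] := by
  refine ⟨!![0, 1; 1, 0; 1, 0], !![1, 0, 0; 0, 3 * b, 3 * c],
    ⟨fun i j => ?_, fun i => ?_⟩, ⟨fun i j => ?_, fun i => ?_⟩, fun i => ?_, fun k => ?_⟩ <;>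
    (try fin_cases i) <;> (try fin_cases j) <;> (try fin_cases k) <;>
    norm_num [Matrix.mul_apply, Fin.sum_univ_succ] <;> linarith

/-- **Sufficiency.** If `γ` is a probability vector with every `γ_i ≤ 2/3` and some
`γ_j ∈ {0, 2/3}`, then the game `H³(γ)` is perfectly winnable with one classical bit:
there is a 1-bit strategy whose visit matrix `V = PA * PB` has zero diagonal and column
averages `γ`. -/
theorem classical_perfect_win_sufficient
    (γ : Fin 3 → ℝ) (hγ0 : ∀ i, 0 ≤ γ i) (hγ1 : ∑ i, γ i = 1)
    (hγ2 : ∀ i, γ i ≤ 2/3) (hj : ∃ j, γ j = 0 ∨ γ j = 2/3) :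
    ∃ (PA : Matrix (Fin 3) (Fin 2) ℝ) (PB : Matrix (Fin 2) (Fin 3) ℝ),
      RowStochastic PA ∧ RowStochastic PB ∧
      (∀ i, (PA * PB) i i = 0) ∧
      (∀ k, (1/3) * ∑ i, (PA * PB) i k = γ k) := by
  obtain ⟨j, hj⟩ := hj
  set σ := Equiv.swap 0 j
  have hγσ : γ ∘ σ = ![γ j, γ (σ 1), γ (σ 2)] := by
    funext i; fin_cases i <;> simp [σ]
  have hsum : γ j + γ (σ 1) + γ (σ 2) = 1 := by
    simpa [Fin.sum_univ_three, σ] using (Equiv.sum_comp σ γ).trans hγ1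
  have hwin : PerfectlyWinnable 2 (γ ∘ σ) := by
    rw [hγσ]
    rcases hj with hj | hj
    · rw [hj]; exact perfectlyWinnable_zero_left (hγ2 _) (hγ2 _) (by linarith)
    · rw [hj]; exact perfectlyWinnable_two_thirds_left (hγ0 _) (hγ0 _) (by linarith)
  simpa [PerfectlyWinnable] using hwin.of_comp_perm
end

section
/- Let γ ∈ ℝ³ be a probability vector (γ_i ≥ 0, γ₁+γ₂+γ₃ = 1) with γ_i ≤ 2/3 for every i. Then there exist unit vectors ψ₁, ψ₂, ψ₃ ∈ ℂ² and nonnegative reals α₁, α₂, α₃ such that ∑_{i=1}^{3} α_i (I − ψ_i ψ_i*) = I (the 2×2 identity), and for every k ∈ {1,2,3}: (1/3)·∑_{i=1}^{3} α_k ⟨ψ_i, (I − ψ_k ψ_k*) ψ_i⟩ = γ_k. (Note that the i = k term vanishes automatically, so the induced visit matrix has zero diagonal.) -/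
open Matrix

/-- The rank-one matrix `ψψ*` (the orthogonal projection onto `ψ` when `ψ` is a unit
vector of `ℂ²`). -/
def projOnto (ψ : Fin 2 → ℂ) : Matrix (Fin 2) (Fin 2) ℂ :=
  fun a b => ψ a * star (ψ b)

/-!
All encoding states are taken on the equator of the Bloch sphere, `ψ(z) = (1, z)/√2` with
`|z| = 1`. Then `I - ψψ*` has Bloch vector `-z`, so the POVM condition reads `∑ αᵢ = 2`,
`∑ αᵢ zᵢ = 0`, and Bob visits `k` with probability `α_k |zᵢ - z_k|² / 4` when `i` is closed.
Balance makes the `αᵢ zᵢ` the sides of a triangle, which forces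
`αᵢ αⱼ |zᵢ - zⱼ|² = 4 (1 - α_k)`; the game thus becomes the polynomial system
`3 γ_k αᵢ αⱼ = αᵢ (1 - αᵢ) + αⱼ (1 - αⱼ)`, solved by the intermediate value theorem along a
curve on which one of its equations holds identically. If some `γ_k = 0` the triangle
degenerates (`α_k = 0`), and the then unconstrained point `z_k` is placed so as to match `γ`.
-/

open ComplexConjugate Set

noncomputable def equatorState (z : ℂ) : Fin 2 → ℂ := ((√2)⁻¹ : ℂ) • ![1, z]

lemma ofReal_sqrt_two_inv_mul_self : ((√2 : ℝ) : ℂ)⁻¹ * ((√2 : ℝ) : ℂ)⁻¹ = 2⁻¹ := by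
  rw [← mul_inv, ← Complex.ofReal_mul, Real.mul_self_sqrt zero_le_two]
  norm_num

lemma star_dotProduct_equatorState (z w : ℂ) :
    star (equatorState z) ⬝ᵥ equatorState w = (1 + conj z * w) / 2 := by
  simp only [dotProduct, equatorState, Fin.sum_univ_two, Pi.star_apply, Pi.smul_apply, smul_eq_mul,
    cons_val_zero, cons_val_one, cons_val_fin_one, star_mul', star_inv₀, RCLike.star_def,
    Complex.conj_ofReal, mul_one, map_one]
  linear_combination (1 + conj z * w) * ofReal_sqrt_two_inv_mul_self

lemma projOnto_mulVec (ψ φ : Fin 2 → ℂ) : projOnto ψ *ᵥ φ = (star ψ ⬝ᵥ φ) • ψ := by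
  ext a
  simp only [mulVec, dotProduct, projOnto, Fin.sum_univ_two, Pi.star_apply, Pi.smul_apply,
    RCLike.star_def, smul_eq_mul]
  ring

lemma star_dotProduct_one_sub_projOnto_mulVec (ψ φ : Fin 2 → ℂ) :
    star φ ⬝ᵥ ((1 - projOnto ψ) *ᵥ φ) = star φ ⬝ᵥ φ - (star φ ⬝ᵥ ψ) * (star ψ ⬝ᵥ φ) := by
  rw [sub_mulVec, one_mulVec, projOnto_mulVec, dotProduct_sub, dotProduct_smul, smul_eq_mul,
    mul_comm]

lemma star_dotProduct_one_sub_projOnto_equatorState {z w : ℂ} (hz : ‖z‖ = 1) :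
    star (equatorState w) ⬝ᵥ ((1 - projOnto (equatorState z)) *ᵥ equatorState w)
      = ((‖w - z‖ ^ 2 / 4 : ℝ) : ℂ) := by
  have hz' : conj z * z = 1 := by simp [Complex.conj_mul', hz]
  rw [star_dotProduct_one_sub_projOnto_mulVec, star_dotProduct_equatorState,
    star_dotProduct_equatorState, star_dotProduct_equatorState]
  push_cast
  rw [← Complex.conj_mul', map_sub]
  linear_combination (-(1 + conj w * w) / 4) * hz'

lemma one_sub_projOnto_equatorState {z : ℂ} (hz : ‖z‖ = 1) :
    1 - projOnto (equatorState z) = (2⁻¹ : ℂ) • !![1, -conj z; -z, 1] := by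
  have h2 := ofReal_sqrt_two_inv_mul_self
  have hz' : z * conj z = 1 := by simp [Complex.mul_conj', hz]
  ext a b
  fin_cases a <;> fin_cases b <;> simp [projOnto, equatorState]
  · linear_combination -h2
  · linear_combination conj z * h2
  · linear_combination z * h2
  · linear_combination -(z * conj z) * h2 - 2⁻¹ * hz'

lemma sum_smul_one_sub_projOnto_equatorState {ι : Type*} [Fintype ι] (α : ι → ℝ) (z : ι → ℂ)
    (hz : ∀ i, ‖z i‖ = 1) (hα : ∑ i, α i = 2) (hbal : ∑ i, α i • z i = 0) :
    ∑ i, α i • (1 - projOnto (equatorState (z i))) = 1 := by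
  have hα' : ∑ i, (α i : ℂ) = 2 := by exact_mod_cast hα
  have hbal' : ∑ i, (α i : ℂ) * z i = 0 := by simpa [Complex.real_smul] using hbal
  have hbal'' : ∑ i, (α i : ℂ) * conj (z i) = 0 := by
    simpa [map_sum] using congrArg conj hbal'
  simp_rw [one_sub_projOnto_equatorState (hz _)]
  ext a b
  fin_cases a <;> fin_cases b <;>
    simp [Matrix.sum_apply, Complex.real_smul, ← Finset.sum_mul, mul_left_comm _ (2⁻¹ : ℂ),
      ← Finset.mul_sum, hα', hbal', hbal'']

section InnerProductSpace

variable {E : Type*} [NormedAddCommGroup E] [InnerProductSpace ℝ E]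

lemma norm_smul_add_smul_sq_add_mul_mul_norm_sub_sq (a b : ℝ) (x y : E) :
    ‖a • x + b • y‖ ^ 2 + a * b * ‖x - y‖ ^ 2 = (a + b) * (a * ‖x‖ ^ 2 + b * ‖y‖ ^ 2) := by
  rw [norm_add_sq_real, norm_sub_sq_real, norm_smul, norm_smul, real_inner_smul_left,
    real_inner_smul_right, mul_pow, mul_pow, Real.norm_eq_abs, Real.norm_eq_abs, sq_abs, sq_abs]
  ring

lemma mul_mul_norm_sub_sq_of_smul_add_smul_add_smul_eq_zero {a b c : ℝ} {x y w : E}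
    (hx : ‖x‖ = 1) (hy : ‖y‖ = 1) (hw : ‖w‖ = 1) (habc : a + b + c = 2)
    (h : a • x + b • y + c • w = 0) : a * b * ‖x - y‖ ^ 2 = 4 * (1 - c) := by
  have hc : ‖a • x + b • y‖ ^ 2 = c ^ 2 := by
    rw [eq_neg_of_add_eq_zero_left h, norm_neg, norm_smul, hw, mul_one, Real.norm_eq_abs, sq_abs]
  have := norm_smul_add_smul_sq_add_mul_mul_norm_sub_sq a b x y
  rw [hc, hx, hy] at this
  linear_combination this + (a + b - c + 2) * habc

end InnerProductSpace

lemma exists_norm_eq_one_norm_sub_one_sq {d : ℝ} (h₀ : 0 ≤ d) (h₄ : d ≤ 4) :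
    ∃ y : ℂ, ‖y‖ = 1 ∧ ‖y - 1‖ ^ 2 = d := by
  refine ⟨Complex.exp (Real.arccos (1 - d / 2) * Complex.I), Complex.norm_exp_ofReal_mul_I _, ?_⟩
  rw [Complex.sq_norm, Complex.normSq_apply]
  simp only [Complex.sub_re, Complex.sub_im, Complex.exp_ofReal_mul_I_re,
    Complex.exp_ofReal_mul_I_im, Complex.one_re, Complex.one_im]
  have hcos := Real.cos_arccos (x := 1 - d / 2) (by linarith) (by linarith)
  linear_combination (-2) * hcos + Real.sin_sq_add_cos_sq _

lemma exists_smul_add_smul_add_smul_eq_zero {a b c : ℝ} (ha : 0 < a) (hb : 0 < b) (hc : 0 < c)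
    (hab : a ≤ b + c) (hbc : b ≤ a + c) (hca : c ≤ a + b) :
    ∃ x y w : ℂ, ‖x‖ = 1 ∧ ‖y‖ = 1 ∧ ‖w‖ = 1 ∧ a • x + b • y + c • w = 0 := by
  obtain ⟨y, hy, hy1⟩ := exists_norm_eq_one_norm_sub_one_sq (d := ((a + b) ^ 2 - c ^ 2) / (a * b))
    (by apply div_nonneg <;> nlinarith) (by rw [div_le_iff₀ (by positivity)]; nlinarith)
  have hv : ‖a • (1 : ℂ) + b • y‖ = c := by
    have := norm_smul_add_smul_sq_add_mul_mul_norm_sub_sq a b 1 y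
    rw [norm_sub_rev, hy1, hy, norm_one] at this
    field_simp at this
    refine (pow_left_inj₀ (norm_nonneg _) hc.le two_ne_zero).1 ?_
    linear_combination this
  refine ⟨1, y, -c⁻¹ • (a • (1 : ℂ) + b • y), norm_one, hy, ?_, ?_⟩
  · rw [norm_smul, hv, norm_neg, norm_inv, Real.norm_of_nonneg hc.le, inv_mul_cancel₀ hc.ne']
  · rw [smul_smul, mul_neg, mul_inv_cancel₀ hc.ne', neg_smul, one_smul, add_neg_cancel]

structure IsEquatorialSolution (γ : Fin 3 → ℝ) (z : Fin 3 → ℂ) (α : Fin 3 → ℝ) : Prop where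
  norm_eq_one : ∀ i, ‖z i‖ = 1
  nonneg : ∀ i, 0 ≤ α i
  sum_eq_two : ∑ i, α i = 2
  sum_smul_eq_zero : ∑ i, α i • z i = 0
  visits : ∀ k, ∑ i, α k * ‖z i - z k‖ ^ 2 = 12 * γ k

lemma IsEquatorialSolution.comp_symm {γ : Fin 3 → ℝ} {z : Fin 3 → ℂ} {α : Fin 3 → ℝ}
    (σ : Equiv.Perm (Fin 3)) (h : IsEquatorialSolution (γ ∘ σ) z α) :
    IsEquatorialSolution γ (z ∘ σ.symm) (α ∘ σ.symm) where
  norm_eq_one i := h.norm_eq_one _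
  nonneg i := h.nonneg _
  sum_eq_two := by simpa [Equiv.sum_comp] using h.sum_eq_two
  sum_smul_eq_zero := (Equiv.sum_comp σ.symm fun i ↦ α i • z i).trans h.sum_smul_eq_zero
  visits k := by
    simpa using (Equiv.sum_comp σ.symm fun i ↦ α (σ.symm k) * ‖z i - z (σ.symm k)‖ ^ 2).trans
      (h.visits (σ.symm k))

lemma exists_isEquatorialSolution_of_eq_zero {γ : Fin 3 → ℝ} (hγ₀ : γ 0 = 0)
    (hsum : ∑ i, γ i = 1) (hle : ∀ i, γ i ≤ 2 / 3) :
    ∃ z α, IsEquatorialSolution γ z α := by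
  rw [Fin.sum_univ_three, hγ₀, zero_add] at hsum
  obtain ⟨y, hy, hy1⟩ := exists_norm_eq_one_norm_sub_one_sq (d := 12 * γ 1 - 4)
    (by linarith [hle 2]) (by linarith [hle 1])
  have hy2 : ‖y + 1‖ ^ 2 = 12 * γ 2 - 4 := by
    have := norm_smul_add_smul_sq_add_mul_mul_norm_sub_sq (1 : ℝ) 1 y 1
    rw [one_smul, one_smul, hy1, hy, norm_one] at this
    linear_combination this - 12 * hsum
  refine ⟨![y, 1, -1], ![0, 1, 1], ⟨?_, ?_, ?_, ?_, ?_⟩⟩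
  · intro i; fin_cases i <;> simp [hy]
  · intro i; fin_cases i <;> simp
  · norm_num [Fin.sum_univ_three, cons_val_two]
  · simp [Fin.sum_univ_three]
  · intro k
    fin_cases k <;> simp [Fin.sum_univ_three, hγ₀, hy1, hy2] <;> norm_num

/-- For the weights `(t + v - 2tv, 1 - t, 1 - v) / (1 - tv)` of `exists_balanced_weights`, the
`γ₀`-equation says `t + v = 3 γ₀` and the `γ₂`-equation is the cubic identity below. -/
lemma exists_weight_parameter {γ₀ γ₁ γ₂ : ℝ} (h₀ : 0 < γ₀) (h₁ : 0 < γ₁) (h₂ : 0 < γ₂)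
    (h₀' : γ₀ < 2 / 3) (h₁' : γ₁ ≤ 2 / 3) (h₂' : γ₂ ≤ 2 / 3) (hsum : γ₀ + γ₁ + γ₂ = 1) :
    ∃ t v : ℝ, 0 ≤ t ∧ t < 1 ∧ 0 ≤ v ∧ v < 1 ∧ t + v = 3 * γ₀ ∧
      (3 * γ₂ - 1 + v) * (t + v - 2 * t * v) = t * (1 - v) := by
  set f : ℝ → ℝ := fun t ↦ (3 * γ₂ - 1 + (3 * γ₀ - t)) * (t + (3 * γ₀ - t) - 2 * t * (3 * γ₀ - t))
    - t * (1 - (3 * γ₀ - t)) with hf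
  have hfc : Continuous f := by fun_prop
  obtain ⟨t, ht₀, ht₁, hv₀, hv₁, hft⟩ :
      ∃ t, 0 ≤ t ∧ t ≤ 1 ∧ 0 ≤ 3 * γ₀ - t ∧ 3 * γ₀ - t ≤ 1 ∧ f t = 0 := by
    rcases le_total (3 * γ₀) 1 with hγ | hγ
    · obtain ⟨t, ⟨ht₀, ht₁⟩, hft⟩ := intermediate_value_Icc' (by linarith : (0 : ℝ) ≤ 3 * γ₀)
        hfc.continuousOn (show (0 : ℝ) ∈ Icc (f (3 * γ₀)) (f 0) from
          ⟨by simp only [hf]; nlinarith, by simp only [hf]; nlinarith⟩)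
      exact ⟨t, ht₀, by linarith, by linarith, by linarith, hft⟩
    · obtain ⟨t, ⟨ht₀, ht₁⟩, hft⟩ := intermediate_value_Icc' (by linarith : 3 * γ₀ - 1 ≤ 1)
        hfc.continuousOn (show (0 : ℝ) ∈ Icc (f 1) (f (3 * γ₀ - 1)) from
          ⟨by simp only [hf]; nlinarith, by simp only [hf]; nlinarith⟩)
      exact ⟨t, by linarith, ht₁, by linarith, by linarith, hft⟩
  have hft' := sub_eq_zero.1 hft
  refine ⟨t, 3 * γ₀ - t, ht₀, ht₁.lt_of_ne ?_, hv₀, hv₁.lt_of_ne ?_, by ring, hft'⟩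
  · rintro rfl; nlinarith
  · intro h; rw [h] at hft'; nlinarith

lemma exists_balanced_weights {γ₀ γ₁ γ₂ : ℝ} (h₀ : 0 < γ₀) (h₁ : 0 < γ₁) (h₂ : 0 < γ₂)
    (h₀' : γ₀ < 2 / 3) (h₁' : γ₁ ≤ 2 / 3) (h₂' : γ₂ ≤ 2 / 3) (hsum : γ₀ + γ₁ + γ₂ = 1) :
    ∃ a₀ a₁ a₂ : ℝ, 0 < a₀ ∧ 0 < a₁ ∧ 0 < a₂ ∧ a₀ ≤ 1 ∧ a₁ ≤ 1 ∧ a₂ ≤ 1 ∧ a₀ + a₁ + a₂ = 2 ∧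
      3 * γ₀ * (a₁ * a₂) = a₁ * (1 - a₁) + a₂ * (1 - a₂) ∧
      3 * γ₁ * (a₀ * a₂) = a₀ * (1 - a₀) + a₂ * (1 - a₂) ∧
      3 * γ₂ * (a₀ * a₁) = a₀ * (1 - a₀) + a₁ * (1 - a₁) := by
  obtain ⟨t, v, ht₀, ht₁, hv₀, hv₁, htv, hf⟩ := exists_weight_parameter h₀ h₁ h₂ h₀' h₁' h₂' hsum
  have hD : 0 < 1 - t * v := by nlinarith
  have hw : 0 < t + v - 2 * t * v := by nlinarith [sq_nonneg (t - v), mul_pos h₀ (sub_pos.2 h₀')]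
  refine ⟨(t + v - 2 * t * v) / (1 - t * v), (1 - t) / (1 - t * v), (1 - v) / (1 - t * v),
    by positivity, div_pos (by linarith) hD, div_pos (by linarith) hD, ?_, ?_, ?_, ?_, ?_, ?_, ?_⟩
  · rw [div_le_one hD]; nlinarith
  · rw [div_le_one hD]; nlinarith
  · rw [div_le_one hD]; nlinarith
  · field_simp; ring
  · field_simp; linear_combination -(1 - t) * (1 - v) * htv
  · field_simp
    linear_combination (1 - v) * (3 * (t + v - 2 * t * v) * hsum + (t + v - 2 * t * v) * htv - hf)
  · field_simp
    linear_combination (1 - t) * hf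

lemma isEquatorialSolution_of_weights {γ : Fin 3 → ℝ} {a₀ a₁ a₂ : ℝ} {z₀ z₁ z₂ : ℂ}
    (ha₀ : 0 < a₀) (ha₁ : 0 < a₁) (ha₂ : 0 < a₂) (hsum : a₀ + a₁ + a₂ = 2)
    (hz₀ : ‖z₀‖ = 1) (hz₁ : ‖z₁‖ = 1) (hz₂ : ‖z₂‖ = 1) (hbal : a₀ • z₀ + a₁ • z₁ + a₂ • z₂ = 0)
    (h₀ : 3 * γ 0 * (a₁ * a₂) = a₁ * (1 - a₁) + a₂ * (1 - a₂))
    (h₁ : 3 * γ 1 * (a₀ * a₂) = a₀ * (1 - a₀) + a₂ * (1 - a₂))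
    (h₂ : 3 * γ 2 * (a₀ * a₁) = a₀ * (1 - a₀) + a₁ * (1 - a₁)) :
    IsEquatorialSolution γ ![z₀, z₁, z₂] ![a₀, a₁, a₂] := by
  have d₀₁ := mul_mul_norm_sub_sq_of_smul_add_smul_add_smul_eq_zero hz₀ hz₁ hz₂ hsum hbal
  have d₀₂ := mul_mul_norm_sub_sq_of_smul_add_smul_add_smul_eq_zero (a := a₀) (b := a₂)
    (c := a₁) hz₀ hz₂ hz₁ (by linear_combination hsum) (by rw [← hbal]; abel)
  have d₁₂ := mul_mul_norm_sub_sq_of_smul_add_smul_add_smul_eq_zero (a := a₁) (b := a₂)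
    (c := a₀) hz₁ hz₂ hz₀ (by linear_combination hsum) (by rw [← hbal]; abel)
  have v₀ : a₀ * ‖z₁ - z₀‖ ^ 2 + a₀ * ‖z₂ - z₀‖ ^ 2 = 12 * γ 0 := by
    rw [norm_sub_rev z₁, norm_sub_rev z₂]
    refine mul_left_cancel₀ (mul_pos ha₁ ha₂).ne' ?_
    linear_combination a₂ * d₀₁ + a₁ * d₀₂ - 4 * h₀
  have v₁ : a₁ * ‖z₀ - z₁‖ ^ 2 + a₁ * ‖z₂ - z₁‖ ^ 2 = 12 * γ 1 := by
    rw [norm_sub_rev z₂]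
    refine mul_left_cancel₀ (mul_pos ha₀ ha₂).ne' ?_
    linear_combination a₂ * d₀₁ + a₀ * d₁₂ - 4 * h₁
  have v₂ : a₂ * ‖z₀ - z₂‖ ^ 2 + a₂ * ‖z₁ - z₂‖ ^ 2 = 12 * γ 2 := by
    refine mul_left_cancel₀ (mul_pos ha₀ ha₁).ne' ?_
    linear_combination a₁ * d₀₂ + a₀ * d₁₂ - 4 * h₂
  refine ⟨?_, ?_, ?_, ?_, ?_⟩
  · intro i; fin_cases i <;> simp [hz₀, hz₁, hz₂]
  · intro i; fin_cases i <;> simp [ha₀.le, ha₁.le, ha₂.le]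
  · simpa [Fin.sum_univ_three] using hsum
  · simpa [Fin.sum_univ_three] using hbal
  · intro k
    fin_cases k
    · simpa [Fin.sum_univ_three] using v₀
    · simpa [Fin.sum_univ_three] using v₁
    · simpa [Fin.sum_univ_three] using v₂

lemma exists_isEquatorialSolution_of_pos {γ : Fin 3 → ℝ} (hpos : ∀ i, 0 < γ i)
    (hγ₀ : γ 0 < 2 / 3) (hsum : ∑ i, γ i = 1) (hle : ∀ i, γ i ≤ 2 / 3) :
    ∃ z α, IsEquatorialSolution γ z α := by
  rw [Fin.sum_univ_three] at hsum
  obtain ⟨a₀, a₁, a₂, ha₀, ha₁, ha₂, ha₀', ha₁', ha₂', ha, h₀, h₁, h₂⟩ :=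
    exists_balanced_weights (hpos 0) (hpos 1) (hpos 2) hγ₀ (hle 1) (hle 2) hsum
  obtain ⟨z₀, z₁, z₂, hz₀, hz₁, hz₂, hbal⟩ :=
    exists_smul_add_smul_add_smul_eq_zero ha₀ ha₁ ha₂ (by linarith) (by linarith) (by linarith)
  exact ⟨_, _, isEquatorialSolution_of_weights ha₀ ha₁ ha₂ ha hz₀ hz₁ hz₂ hbal h₀ h₁ h₂⟩

lemma exists_isEquatorialSolution_of_comp {γ : Fin 3 → ℝ} (σ : Equiv.Perm (Fin 3))
    (h : ∃ z α, IsEquatorialSolution (γ ∘ σ) z α) : ∃ z α, IsEquatorialSolution γ z α :=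
  let ⟨_, _, h⟩ := h
  ⟨_, _, h.comp_symm σ⟩

theorem exists_isEquatorialSolution {γ : Fin 3 → ℝ} (hnonneg : ∀ i, 0 ≤ γ i)
    (hsum : ∑ i, γ i = 1) (hle : ∀ i, γ i ≤ 2 / 3) : ∃ z α, IsEquatorialSolution γ z α := by
  have hsum' (σ : Equiv.Perm (Fin 3)) : ∑ i, (γ ∘ σ) i = 1 := (Equiv.sum_comp σ γ).trans hsum
  by_cases hzero : ∃ k, γ k = 0
  · obtain ⟨k, hk⟩ := hzero
    exact exists_isEquatorialSolution_of_comp (Equiv.swap 0 k)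
      (exists_isEquatorialSolution_of_eq_zero (by simpa using hk) (hsum' _) fun i ↦ hle _)
  · have hpos i : 0 < γ i := (hnonneg i).lt_of_ne' fun h ↦ hzero ⟨i, h⟩
    obtain ⟨k, hk⟩ : ∃ k, γ k < 2 / 3 := by
      by_contra! h
      rw [Fin.sum_univ_three] at hsum
      linarith [h 0, h 1, hpos 2]
    exact exists_isEquatorialSolution_of_comp (Equiv.swap 0 k)
      (exists_isEquatorialSolution_of_pos (fun i ↦ hpos _) (by simpa using hk) (hsum' _)
        fun i ↦ hle _)

/-- **Quantum winnability.** Every game `H³(γ)` in the physically allowed polytope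
(probability vector with every `γ_i ≤ 2/3`) is perfectly winnable with one qubit:
there are pure encoding states `ψ_i` and a POVM with effects `α_i (I − ψ_i ψ_i*)`
whose visit probabilities have zero diagonal and column averages `γ`. -/
theorem quantum_perfect_win
    (γ : Fin 3 → ℝ) (hγ0 : ∀ i, 0 ≤ γ i) (hγ1 : ∑ i, γ i = 1)
    (hγ2 : ∀ i, γ i ≤ 2/3) :
    ∃ (ψ : Fin 3 → (Fin 2 → ℂ)) (α : Fin 3 → ℝ),
      (∀ i, star (ψ i) ⬝ᵥ ψ i = 1) ∧
      (∀ i, 0 ≤ α i) ∧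
      (∑ i, α i • ((1 : Matrix (Fin 2) (Fin 2) ℂ) - projOnto (ψ i))
        = (1 : Matrix (Fin 2) (Fin 2) ℂ)) ∧
      (∀ k, (1/3 : ℂ) * ∑ i, (α k : ℂ) *
          (star (ψ i) ⬝ᵥ (((1 : Matrix (Fin 2) (Fin 2) ℂ) - projOnto (ψ k)) *ᵥ ψ i))
        = (γ k : ℂ)) := by
  obtain ⟨z, α, hsol⟩ := exists_isEquatorialSolution hγ0 hγ1 hγ2
  refine ⟨fun i ↦ equatorState (z i), α, fun i ↦ ?_, hsol.nonneg,
    sum_smul_one_sub_projOnto_equatorState α z hsol.norm_eq_one hsol.sum_eq_two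
      hsol.sum_smul_eq_zero, fun k ↦ ?_⟩
  · rw [star_dotProduct_equatorState, Complex.conj_mul', hsol.norm_eq_one]
    norm_num
  · simp_rw [star_dotProduct_one_sub_projOnto_equatorState (hsol.norm_eq_one _)]
    have h : (1 / 3 : ℝ) * ∑ i, α k * (‖z i - z k‖ ^ 2 / 4) = γ k := by
      simp_rw [← mul_div_assoc, ← Finset.sum_div, hsol.visits k]
      ring
    rw [← h]
    push_cast
    ring
end

section
/- Let ρ₁, ρ₂, ρ₃ be 2×2 complex density matrices (positive semidefinite with trace 1), each of which is diagonal in the standard basis of ℂ². Let M₁, M₂, M₃ be 2×2 positive semidefinite complex matrices with M₁ + M₂ + M₃ = I. Then there exist a 3×2 row-stochastic real matrix P^A and a 2×3 row-stochastic real matrix P^B such that Tr(M_k ρ_i) = ∑_{j=1}^{2} P^A(i,j) P^B(j,k) for all i, k ∈ {1,2,3}. -/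
open Matrix ComplexOrder

/-! For a diagonal state `ρ`, `Tr(M ρ) = ∑ⱼ ρⱼⱼ (M)ⱼⱼ`. So the sender transmits the bit `j` with
probability `ρⱼⱼ` and the receiver answers `k` with probability `(M_k)ⱼⱼ`: both are probability
distributions because states and POVM elements are positive semidefinite, `Tr ρ = 1` and
`∑ₖ M_k = 1`. -/

namespace Matrix

lemma PosSemidef.re_diag_nonneg {n : Type*} {A : Matrix n n ℂ} (hA : A.PosSemidef) (j : n) :
    0 ≤ (A j j).re :=
  (Complex.nonneg_iff.mp hA.diag_nonneg).1

variable {n : Type*} [Fintype n]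

lemma IsDiag.trace_mul {R : Type*} [NonUnitalNonAssocSemiring R] {A B : Matrix n n R}
    (hB : B.IsDiag) : (A * B).trace = ∑ j, A j j * B j j := by
  classical
  rw [← hB.diagonal_diag]
  simp only [trace, diag_apply, mul_diagonal, diagonal_apply_eq]

lemma IsDiag.trace_mul_eq_sum_re {A B : Matrix n n ℂ} (hA : A.IsHermitian) (hB : B.IsHermitian)
    (hBdiag : B.IsDiag) : (A * B).trace = ((∑ j, (B j j).re * (A j j).re : ℝ) : ℂ) := by
  rw [hBdiag.trace_mul]
  push_cast
  refine Finset.sum_congr rfl fun j _ => ?_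
  rw [mul_comm, ← hA.coe_re_apply_self j, ← hB.coe_re_apply_self j]
  rfl

end Matrix

lemma rowStochastic_re_diag_of_states {m n : ℕ} (ρ : Fin m → Matrix (Fin n) (Fin n) ℂ)
    (hρ : ∀ i, (ρ i).PosSemidef ∧ (ρ i).trace = 1) :
    RowStochastic (of fun i j => (ρ i j j).re) :=
  ⟨fun i j => (hρ i).1.re_diag_nonneg j, fun i => by
    simpa [trace] using congrArg Complex.re (hρ i).2⟩

lemma rowStochastic_re_diag_of_povm {m n : ℕ} (M : Fin m → Matrix (Fin n) (Fin n) ℂ)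
    (hM : ∀ k, (M k).PosSemidef) (hMsum : ∑ k, M k = 1) :
    RowStochastic (of fun j k => (M k j j).re) :=
  ⟨fun j k => (hM k).re_diag_nonneg j, fun j => by
    simpa [Matrix.sum_apply] using congrArg (fun A => (A j j).re) hMsum⟩

/-- **Proposition 3, first half.** A quantum strategy whose encoding states `ρ_i` are all
diagonal in the standard basis (no coherence) can be simulated by a classical 1-bit
strategy: the outcome probabilities `Tr(M_k ρ_i)` of any 3-outcome POVM `{M_k}` factor
through a pair of row-stochastic matrices. -/
theorem diagonal_states_classically_simulable
    (ρ : Fin 3 → Matrix (Fin 2) (Fin 2) ℂ)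
    (hρ : ∀ i, (ρ i).PosSemidef ∧ (ρ i).trace = 1)
    (hdiag : ∀ i, ∀ a b : Fin 2, a ≠ b → ρ i a b = 0)
    (M : Fin 3 → Matrix (Fin 2) (Fin 2) ℂ)
    (hM : ∀ k, (M k).PosSemidef) (hMsum : ∑ k, M k = 1) :
    ∃ (PA : Matrix (Fin 3) (Fin 2) ℝ) (PB : Matrix (Fin 2) (Fin 3) ℝ),
      RowStochastic PA ∧ RowStochastic PB ∧
      ∀ i k, (M k * ρ i).trace = ((∑ j, PA i j * PB j k : ℝ) : ℂ) :=
  ⟨_, _, rowStochastic_re_diag_of_states ρ hρ, rowStochastic_re_diag_of_povm M hM hMsum,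
    fun i k => IsDiag.trace_mul_eq_sum_re (hM k).isHermitian (hρ i).1.isHermitian (hdiag i)⟩
end

section
/- Let ρ₁, ρ₂, ρ₃ be 2×2 complex density matrices, each diagonal in the standard basis of ℂ², and let M₁, M₂, M₃ be 2×2 positive semidefinite complex matrices with M₁ + M₂ + M₃ = I. Suppose Tr(M_i ρ_i) = 0 for all i ∈ {1,2,3}, and let γ_k = (1/3)·∑_{i=1}^{3} Tr(M_k ρ_i) for k ∈ {1,2,3}. Then there exists an index j with γ_j = 0 or γ_j = 2/3. -/
/-!
With `d k e = M k e e` and `w i e = ρ i e e`, diagonality gives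
`Tr(M_k ρ_i) = ∑ₑ d k e * w i e`, so everything reduces to two nonnegative weight systems
with `∑ₖ d k e = 1` and `∑ₑ w i e = 1`. Exclusion forces `d i e * w i e = 0`. If some `d k`
vanishes, then `γ_k = 0`. Otherwise every `w i` is a point mass at a basis vector `x i` with
`d i (x i) = 0`. The map `x : Fin 3 → Fin 2` is not constant, since each column of `d` sums
to `1`, so one index `j` is the odd one out. The other `M k` vanish at the other basis vector
`e`, which forces `d j e = 1` and then `3 γ_j = d j (x j) + 2 d j e = 2`.
-/

open Matrix ComplexOrder

theorem Matrix.IsDiag.trace_mul_eq_sum_diag {n R : Type*} [Fintype n] [DecidableEq n]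
    [NonUnitalNonAssocSemiring R] {ρ : Matrix n n R} (hρ : ρ.IsDiag) (M : Matrix n n R) :
    (M * ρ).trace = ∑ e, M e e * ρ e e := by
  rw [← hρ.diagonal_diag]
  simp [Matrix.trace, Matrix.mul_diagonal]

theorem Fin.exists_odd_one_out (x : Fin 3 → Fin 2) (hx : ∀ e, ∃ k, x k ≠ e) :
    ∃ j e, x j ≠ e ∧ ∀ k ≠ j, x k = e := by
  revert x; decide

section

variable {R : Type*}

theorem exists_eq_single_of_mul_eq_zero [NonAssocSemiring R] [NoZeroDivisors R]
    {d w : Fin 2 → R} (hw : ∑ e, w e = 1) (hdw : ∀ e, d e * w e = 0) (hd : d ≠ 0) :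
    ∃ x, w = Pi.single x 1 ∧ d x = 0 := by
  obtain ⟨e, hde⟩ := Function.ne_iff.1 hd
  have hwe : w e = 0 := (mul_eq_zero.1 (hdw e)).resolve_left hde
  have hwe' : w e.rev = 1 := by
    fin_cases e <;> simp_all [Fin.sum_univ_two]
  refine ⟨e.rev, ?_, by simpa [hwe'] using hdw e.rev⟩
  funext e'
  fin_cases e <;> fin_cases e' <;> simp_all

theorem exists_sum_apply_eq_two [AddCommMonoidWithOne R] [NeZero (1 : R)]
    (d : Fin 3 → Fin 2 → R) (x : Fin 3 → Fin 2) (hd : ∀ e, ∑ k, d k e = 1)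
    (hdx : ∀ k, d k (x k) = 0) :
    ∃ j, ∑ i, d j (x i) = 2 := by
  have hx : ∀ e, ∃ k, x k ≠ e := by
    intro e
    by_contra! hxe
    have : ∑ k, d k e = 0 := Finset.sum_eq_zero fun k _ => hxe k ▸ hdx k
    exact one_ne_zero (hd e ▸ this)
  obtain ⟨j, e, hxj, hxk⟩ := Fin.exists_odd_one_out x hx
  have hdje : d j e = 1 := by
    rw [← hd e, Finset.sum_eq_single j (fun k _ hk => hxk k hk ▸ hdx k) (by simp)]
  refine ⟨j, ?_⟩
  rw [← Finset.add_sum_erase _ _ (Finset.mem_univ j), hdx j,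
    Finset.sum_congr rfl fun i hi => by rw [hxk i (Finset.ne_of_mem_erase hi), hdje]]
  simp [Finset.card_erase_of_mem]

theorem exists_sum_sum_mul_eq_zero_or_eq_two [Semiring R] [PartialOrder R] [IsOrderedRing R]
    [NoZeroDivisors R] [Nontrivial R] (d w : Fin 3 → Fin 2 → R) (hd : ∀ k e, 0 ≤ d k e)
    (hw : ∀ i e, 0 ≤ w i e) (hd_sum : ∀ e, ∑ k, d k e = 1) (hw_sum : ∀ i, ∑ e, w i e = 1)
    (hdw : ∀ i, ∑ e, d i e * w i e = 0) :
    ∃ j, ∑ i, ∑ e, d j e * w i e = 0 ∨ ∑ i, ∑ e, d j e * w i e = 2 := by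
  by_cases hzero : ∃ k, d k = 0
  · obtain ⟨k, hk⟩ := hzero
    exact ⟨k, .inl (by simp [hk])⟩
  push Not at hzero
  have hdw' : ∀ i e, d i e * w i e = 0 := fun i e =>
    (Finset.sum_eq_zero_iff_of_nonneg fun e _ => mul_nonneg (hd i e) (hw i e)).1 (hdw i) e
      (Finset.mem_univ e)
  choose x hwx hdx using fun i =>
    exists_eq_single_of_mul_eq_zero (hw_sum i) (hdw' i) (hzero i)
  obtain ⟨j, hj⟩ := exists_sum_apply_eq_two d x hd_sum hdx
  exact ⟨j, .inr (by simpa [hwx, Pi.single_apply] using hj)⟩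

end

/-- **Quantum advantage certifies coherence.** If a quantum strategy uses encoding states
that are all diagonal in the standard basis (no coherence) and perfectly satisfies
condition (h1) of the 3-restaurant game, then the resulting visiting-probability vector
`γ` must have some component equal to `0` or `2/3`. -/
theorem diagonal_states_gamma_constraint
    (ρ : Fin 3 → Matrix (Fin 2) (Fin 2) ℂ)
    (hρ : ∀ i, (ρ i).PosSemidef ∧ (ρ i).trace = 1)
    (hdiag : ∀ i, ∀ a b : Fin 2, a ≠ b → ρ i a b = 0)
    (M : Fin 3 → Matrix (Fin 2) (Fin 2) ℂ)
    (hM : ∀ k, (M k).PosSemidef) (hMsum : ∑ k, M k = 1)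
    (h1 : ∀ i, (M i * ρ i).trace = 0)
    (γ : Fin 3 → ℝ)
    (hγ : ∀ k, ((γ k : ℝ) : ℂ) = (1/3 : ℂ) * ∑ i, (M k * ρ i).trace) :
    ∃ j, γ j = 0 ∨ γ j = 2/3 := by
  have hγ' : ∀ k, (γ k : ℂ) = 1 / 3 * ∑ i, ∑ e, M k e e * ρ i e e := fun k => by
    rw [hγ k]
    exact congrArg _ <| Finset.sum_congr rfl fun i _ =>
      IsDiag.trace_mul_eq_sum_diag (hdiag i) (M k)
  have hM_diag_sum : ∀ e, ∑ k, M k e e = 1 := fun e => by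
    simpa [Matrix.sum_apply] using congrFun (congrFun hMsum e) e
  obtain ⟨j, hj⟩ := exists_sum_sum_mul_eq_zero_or_eq_two (fun k e => M k e e) (fun i e => ρ i e e)
    (fun k _ => (hM k).diag_nonneg) (fun i _ => (hρ i).1.diag_nonneg) hM_diag_sum
    (fun i => (hρ i).2) (fun i => IsDiag.trace_mul_eq_sum_diag (hdiag i) (M i) ▸ h1 i)
  refine ⟨j, hj.imp (fun h => ?_) (fun h => ?_)⟩
  · exact_mod_cast (by rw [hγ' j, h]; norm_num : (γ j : ℂ) = 0)
  · exact_mod_cast (by rw [hγ' j, h]; norm_num : (γ j : ℂ) = (2 / 3 : ℝ))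
end

section
/- Let ρ₁, ρ₂, ρ₃ be 2×2 complex density matrices, let {v₁, v₂} be an orthonormal basis of ℂ², and let P^B be a 2×3 row-stochastic real matrix. Define p(k|i) = ∑_{j=1}^{2} ⟨v_j, ρ_i v_j⟩ P^B(j,k). Suppose p(i|i) = 0 for all i ∈ {1,2,3} and set γ_k = (1/3)·∑_{i=1}^{3} p(k|i). Then there exists an index j with γ_j = 0 or γ_j = 2/3. -/
open Matrix ComplexOrder

theorem Matrix.sum_star_dotProduct_mulVec_eq_trace {R n : Type*} [CommRing R] [StarRing R]
    [Fintype n] [DecidableEq n] (A : Matrix n n R) {v : n → n → R}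
    (hv : ∀ j j', star (v j) ⬝ᵥ v j' = if j = j' then 1 else 0) :
    ∑ j, star (v j) ⬝ᵥ (A *ᵥ v j) = A.trace := by
  set V : Matrix n n R := (of v)ᵀ
  have hV : Vᴴ * V = 1 := by
    ext j j'
    simpa [V, mul_apply, dotProduct, one_apply] using hv j j'
  calc ∑ j, star (v j) ⬝ᵥ (A *ᵥ v j) = (Vᴴ * A * V).trace := by
        simp [V, trace, mul_apply, mulVec, dotProduct, Finset.mul_sum, mul_assoc]
    _ = (V * Vᴴ * A).trace := trace_mul_cycle _ _ _
    _ = A.trace := by rw [mul_eq_one_comm.mp hV, Matrix.one_mul]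

theorem Matrix.PosSemidef.exists_probability_vector {𝕜 n : Type*} [RCLike 𝕜] [Fintype n]
    [DecidableEq n] {ρ : Matrix n n 𝕜} (hρ : ρ.PosSemidef) (htr : ρ.trace = 1)
    {v : n → n → 𝕜} (hv : ∀ j j', star (v j) ⬝ᵥ v j' = if j = j' then 1 else 0) :
    ∃ w : n → ℝ, (∀ j, 0 ≤ w j) ∧ ∑ j, w j = 1 ∧ ∀ j, star (v j) ⬝ᵥ (ρ *ᵥ v j) = w j := by
  choose w hw0 hw using fun j =>
    RCLike.nonneg_iff_exists_ofReal.mp (hρ.dotProduct_mulVec_nonneg (v j))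
  refine ⟨w, hw0, ?_, fun j => (hw j).symm⟩
  have := ρ.sum_star_dotProduct_mulVec_eq_trace hv
  simp only [← hw, htr] at this
  exact_mod_cast this

theorem Fin.sum_univ_two_of_ne {M : Type*} [AddCommMonoid M] (f : Fin 2 → M) {j j' : Fin 2}
    (h : j ≠ j') : ∑ x, f x = f j + f j' := by
  fin_cases j <;> fin_cases j' <;> simp_all [Fin.sum_univ_two, add_comm]

theorem RowStochastic.mul_eq_zero_of_mul_apply_self_eq_zero {m n : ℕ}
    {W : Matrix (Fin n) (Fin m) ℝ} {B : Matrix (Fin m) (Fin n) ℝ} (hW : RowStochastic W)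
    (hB : RowStochastic B) {i : Fin n} (h : (W * B) i i = 0) (j : Fin m) : W i j * B j i = 0 :=
  (Finset.sum_eq_zero_iff_of_nonneg fun j _ => mul_nonneg (hW.1 i j) (hB.1 j i)).mp
    (by rwa [mul_apply] at h) j (Finset.mem_univ j)

section TwoOutcomes

variable {n : ℕ} {W : Matrix (Fin n) (Fin 2) ℝ} {B : Matrix (Fin 2) (Fin n) ℝ}

theorem RowStochastic.apply_eq_ite_of_mul_eq_zero (hW : RowStochastic W)
    (hWB : ∀ i j, W i j * B j i = 0) (hcol : ∀ i, ∃ j, B j i ≠ 0) (i : Fin n) (j : Fin 2) :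
    W i j = if B j i = 0 then 1 else 0 := by
  split_ifs with h
  · obtain ⟨j', hj'⟩ := hcol i
    have hne : j ≠ j' := by rintro rfl; exact hj' h
    have hrow := hW.2 i
    rw [Fin.sum_univ_two_of_ne _ hne, (mul_eq_zero.mp (hWB i j')).resolve_right hj'] at hrow
    linarith
  · exact (mul_eq_zero.mp (hWB i j)).resolve_right h

theorem RowStochastic.apply_eq_zero_of_apply_ne_zero (hW : RowStochastic W)
    (hWB : ∀ i j, W i j * B j i = 0) {i : Fin n} {j j' : Fin 2} (hj : B j i ≠ 0) (hne : j ≠ j') :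
    B j' i = 0 := by
  by_contra hj'
  have hrow := hW.2 i
  rw [Fin.sum_univ_two_of_ne _ hne, (mul_eq_zero.mp (hWB i j)).resolve_right hj,
    (mul_eq_zero.mp (hWB i j')).resolve_right hj'] at hrow
  norm_num at hrow

theorem sum_mul_apply_eq_of_row_support_eq_singleton (hW : RowStochastic W)
    (hB : RowStochastic B) (hWB : ∀ i j, W i j * B j i = 0) (hcol : ∀ i, ∃ j, B j i ≠ 0)
    {j : Fin 2} {l : Fin n} (hl : ∀ i, B j i ≠ 0 ↔ i = l) : ∑ i, (W * B) i l = n - 1 := by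
  have hBl : B j l = 1 := by
    rw [← hB.2 j, Finset.sum_eq_single l (fun i _ hi => not_not.mp (mt (hl i).mp hi))
      (by simp)]
  have hcolumn : ∀ i, (W * B) i l = W i j := fun i => by
    rw [mul_apply, Finset.sum_eq_single j (fun j' _ hj' => by
      rw [hW.apply_eq_zero_of_apply_ne_zero hWB ((hl l).mpr rfl) hj'.symm, mul_zero]) (by simp),
      hBl, mul_one]
  have hWj : ∀ i, W i j = 1 - if i = l then 1 else 0 := fun i => by
    have hz : B j i = 0 ↔ ¬i = l := by rw [← hl, not_not]
    rw [hW.apply_eq_ite_of_mul_eq_zero hWB hcol]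
    simp only [hz]
    split_ifs <;> norm_num
  simp [hcolumn, hWj, Finset.sum_sub_distrib]

end TwoOutcomes

theorem exists_row_support_eq_singleton {B : Matrix (Fin 2) (Fin 3) ℝ} (hB : RowStochastic B)
    (hsupp : ∀ i, B 0 i = 0 ↔ B 1 i ≠ 0) : ∃ j l, ∀ i, B j i ≠ 0 ↔ i = l := by
  have hne : ∀ j, ∃ i, B j i ≠ 0 := fun j => by
    obtain ⟨i, -, hi⟩ := Finset.exists_ne_zero_of_sum_ne_zero (s := Finset.univ) (f := B j)
      (by rw [hB.2 j]; exact one_ne_zero)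
    exact ⟨i, hi⟩
  set S := Finset.univ.filter fun i => B 0 i ≠ 0
  have hS : 0 < S.card := by
    obtain ⟨i, hi⟩ := hne 0
    exact Finset.card_pos.mpr ⟨i, by simpa [S] using hi⟩
  have hSc : 0 < Sᶜ.card := by
    obtain ⟨i, hi⟩ := hne 1
    exact Finset.card_pos.mpr ⟨i, by simpa [S, hsupp] using hi⟩
  have hcard : S.card + Sᶜ.card = 3 := Finset.card_add_card_compl S
  rcases (by omega : S.card = 1 ∨ Sᶜ.card = 1) with h | h
  · obtain ⟨l, hl⟩ := Finset.card_eq_one.mp h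
    exact ⟨0, l, fun i => by simpa [S] using Finset.ext_iff.mp hl i⟩
  · obtain ⟨l, hl⟩ := Finset.card_eq_one.mp h
    exact ⟨1, l, fun i => by simpa [S, hsupp] using Finset.ext_iff.mp hl i⟩

theorem exists_sum_mul_apply_eq_zero_or_two {W : Matrix (Fin 3) (Fin 2) ℝ}
    {B : Matrix (Fin 2) (Fin 3) ℝ} (hW : RowStochastic W) (hB : RowStochastic B)
    (hdiag : ∀ i, (W * B) i i = 0) : ∃ l, ∑ i, (W * B) i l = 0 ∨ ∑ i, (W * B) i l = 2 := by
  have hWB i := hW.mul_eq_zero_of_mul_apply_self_eq_zero hB (hdiag i)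
  by_cases hzero : ∃ l, ∀ j, B j l = 0
  · obtain ⟨l, hl⟩ := hzero
    exact ⟨l, Or.inl (by simp [mul_apply, hl])⟩
  push Not at hzero
  have hsupp : ∀ i, B 0 i = 0 ↔ B 1 i ≠ 0 := fun i => by
    refine ⟨fun h0 => ?_, fun h1 => hW.apply_eq_zero_of_apply_ne_zero hWB h1 (by decide)⟩
    obtain ⟨j, hj⟩ := hzero i
    fin_cases j
    exacts [absurd h0 hj, hj]
  obtain ⟨j, l, hl⟩ := exists_row_support_eq_singleton hB hsupp
  refine ⟨l, Or.inr ?_⟩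
  rw [sum_mul_apply_eq_of_row_support_eq_singleton hW hB hWB hzero hl]
  norm_num

/-- **Quantum advantage certifies a non-projective measurement.** If Bob decodes with a
projective measurement in an orthonormal basis `{v₁, v₂}` (visiting restaurant `k` with
probability `P^B(j,k)` on outcome `j`) and condition (h1) holds perfectly, then the
resulting visiting-probability vector `γ` must have some component equal to `0` or `2/3`. -/
theorem projective_measurement_gamma_constraint
    (ρ : Fin 3 → Matrix (Fin 2) (Fin 2) ℂ)
    (hρ : ∀ i, (ρ i).PosSemidef ∧ (ρ i).trace = 1)
    (v : Fin 2 → (Fin 2 → ℂ))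
    (hv : ∀ j j', star (v j) ⬝ᵥ v j' = if j = j' then 1 else 0)
    (PB : Matrix (Fin 2) (Fin 3) ℝ) (hPB : RowStochastic PB)
    (p : Fin 3 → Fin 3 → ℂ)
    (hp : ∀ k i, p k i = ∑ j, (star (v j) ⬝ᵥ ((ρ i) *ᵥ v j)) * ((PB j k : ℝ) : ℂ))
    (h1 : ∀ i, p i i = 0)
    (γ : Fin 3 → ℝ)
    (hγ : ∀ k, ((γ k : ℝ) : ℂ) = (1/3 : ℂ) * ∑ i, p k i) :
    ∃ j, γ j = 0 ∨ γ j = 2/3 := by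
  obtain ⟨W, hW, hWρ⟩ : ∃ W : Matrix (Fin 3) (Fin 2) ℝ, RowStochastic W ∧
      ∀ i j, star (v j) ⬝ᵥ (ρ i *ᵥ v j) = W i j := by
    choose W hW0 hW1 hWρ using fun i => (hρ i).1.exists_probability_vector (hρ i).2 hv
    exact ⟨W, ⟨hW0, hW1⟩, hWρ⟩
  have hpW : ∀ k i, p k i = ((W * PB) i k : ℂ) := fun k i => by
    rw [hp, mul_apply, Complex.ofReal_sum]
    exact Finset.sum_congr rfl fun j _ => by rw [hWρ, Complex.ofReal_mul]
  simp only [hpW] at h1 hγ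
  obtain ⟨k, hk⟩ := exists_sum_mul_apply_eq_zero_or_two hW hPB fun i => by exact_mod_cast h1 i
  have hγk : 3 * γ k = ∑ i, (W * PB) i k := by
    have h3 : ((3 * γ k : ℝ) : ℂ) = ((∑ i, (W * PB) i k : ℝ) : ℂ) := by
      push_cast
      linear_combination 3 * hγ k
    exact_mod_cast h3
  exact ⟨k, hk.imp (fun h => by linarith) fun h => by linarith⟩
end

section
/- For γ ∈ ℝ³, the following are equivalent: (1) there exists a 3×3 real matrix V with nonnegative entries, each row summing to 1, and zero diagonal, such that γ_k = (1/3)·∑_{i=1}^{3} V(i,k) for all k; (2) γ_k ≥ 0 for all k, γ₁ + γ₂ + γ₃ = 1, and γ_k ≤ 2/3 for all k. -/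
open Matrix

/-- **The physically allowed game space.** A vector `γ ∈ ℝ³` arises as the vector of
column averages of a 3×3 row-stochastic matrix with zero diagonal if and only if `γ` is
a probability vector with every component at most `2/3`. -/
theorem game_space_characterization (γ : Fin 3 → ℝ) :
    (∃ V : Matrix (Fin 3) (Fin 3) ℝ,
        (∀ i j, 0 ≤ V i j) ∧ (∀ i, ∑ j, V i j = 1) ∧ (∀ i, V i i = 0) ∧
        ∀ k, γ k = (1/3) * ∑ i, V i k) ↔
    ((∀ k, 0 ≤ γ k) ∧ (∑ k, γ k = 1) ∧ (∀ k, γ k ≤ 2/3)) := by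
  constructor
  · rintro ⟨V, hpos, hrow, hdiag, hγ⟩
    have e0 := hγ 0; have e1 := hγ 1; have e2 := hγ 2
    have r0 := hrow 0; have r1 := hrow 1; have r2 := hrow 2
    have d0 := hdiag 0; have d1 := hdiag 1; have d2 := hdiag 2
    simp only [Fin.sum_univ_three] at e0 e1 e2 r0 r1 r2
    refine ⟨?_, ?_, ?_⟩
    · intro k
      fin_cases k
      · show (0:ℝ) ≤ γ 0
        have := hpos 0 0; have := hpos 1 0; have := hpos 2 0; linarith
      · show (0:ℝ) ≤ γ 1
        have := hpos 0 1; have := hpos 1 1; have := hpos 2 1; linarith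
      · show (0:ℝ) ≤ γ 2
        have := hpos 0 2; have := hpos 1 2; have := hpos 2 2; linarith
    · simp only [Fin.sum_univ_three]; linarith
    · intro k
      fin_cases k
      · show γ 0 ≤ 2/3
        have := hpos 1 1; have := hpos 1 2; have := hpos 2 1; have := hpos 2 2
        linarith
      · show γ 1 ≤ 2/3
        have := hpos 0 0; have := hpos 0 2; have := hpos 2 0; have := hpos 2 2
        linarith
      · show γ 2 ≤ 2/3
        have := hpos 0 0; have := hpos 0 1; have := hpos 1 0; have := hpos 1 1
        linarith
  · rintro ⟨h0, hsum, h23⟩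
    have g0 := h0 0; have g1 := h0 1; have g2 := h0 2
    have u0 := h23 0; have u1 := h23 1; have u2 := h23 2
    simp only [Fin.sum_univ_three] at hsum
    set c1 : ℝ := 3 * γ 0 with hc1
    set c2 : ℝ := 3 * γ 1 with hc2
    set c3 : ℝ := 3 * γ 2 with hc3
    have hcg1 : c1 = 3 * γ 0 := hc1
    have hcg2 : c2 = 3 * γ 1 := hc2
    have hcg3 : c3 = 3 * γ 2 := hc3
    set t : ℝ := max (max 0 (c2 - 1)) (1 - c3) with ht
    have ht0 : (0:ℝ) ≤ t := le_trans (le_max_left 0 (c2 - 1)) (le_max_left _ _)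
    have ht1 : c2 - 1 ≤ t := le_trans (le_max_right 0 (c2 - 1)) (le_max_left _ _)
    have ht2 : 1 - c3 ≤ t := le_max_right _ _
    have htu1 : t ≤ 1 :=
      max_le (max_le (by norm_num) (by linarith)) (by linarith)
    have htu2 : t ≤ c2 :=
      max_le (max_le (by linarith) (by linarith)) (by linarith)
    have htu3 : t ≤ 2 - c3 :=
      max_le (max_le (by linarith) (by linarith)) (by linarith)
    refine ⟨!![0, t, 1 - t; c1 + c2 - 1 - t, 0, c3 - 1 + t; 1 - c2 + t, c2 - t, 0],
      ?_, ?_, ?_, ?_⟩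
    · intro i j
      fin_cases i <;> fin_cases j <;>
        norm_num [Matrix.cons_val_zero, Matrix.cons_val_one, Matrix.head_cons,
          Matrix.cons_val_two, Matrix.tail_cons, Fin.mk_zero, Fin.mk_one] <;>
        linarith
    · intro i
      fin_cases i <;>
        norm_num [Fin.sum_univ_three, Matrix.cons_val_zero, Matrix.cons_val_one,
          Matrix.head_cons, Matrix.cons_val_two, Matrix.tail_cons, Fin.mk_zero,
          Fin.mk_one] <;>
        linarith
    · intro i
      fin_cases i <;>
        norm_num [Matrix.cons_val_zero, Matrix.cons_val_one, Matrix.head_cons,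
          Matrix.cons_val_two, Matrix.tail_cons, Fin.mk_zero, Fin.mk_one]
    · intro k
      fin_cases k <;> [show γ 0 = _; show γ 1 = _; show γ 2 = _] <;>
        norm_num [Fin.sum_univ_three, Matrix.cons_val_zero, Matrix.cons_val_one,
          Matrix.head_cons, Matrix.cons_val_two, Matrix.tail_cons, Fin.mk_zero,
          Fin.mk_one] <;>
        linarith
end

section
/- Let x ∈ [0,1] and let A, B be 2×2 Hermitian positive semidefinite complex matrices with A + B = diag(1, x) and rank A ≤ 1, rank B ≤ 1. Then there exists a 2×2 unitary matrix U = (u_{jk})_{j,k∈{0,1}} such that A = [[|u₀₀|², √x·conj(u₀₀)·u₀₁], [√x·u₀₀·conj(u₀₁), x·|u₀₁|²]] and B = [[|u₁₀|², √x·conj(u₁₀)·u₁₁], [√x·u₁₀·conj(u₁₁), x·|u₁₁|²]]. -/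
/-!
Rank at most one forces `det A = det B = 0`. Since `B = diag(1, x) - A`, the two determinant
equations pin `A` down by `a = A₀₀ ∈ [0, 1]` and `c = A₀₁`: `A₁₁ = x (1 - a)` and
`|c|² = x a (1 - a)`. Hence `c = √x √a z` for some `z` with `|z|² = 1 - a`, and the unitary
`U = [[√a, z], [-z̄, √a]]` realizes both `A` and `B`.
-/

open Matrix ComplexOrder

theorem Matrix.det_eq_zero_of_rank_lt {n R : Type*} [Fintype n] [DecidableEq n] [CommRing R]
    [IsDomain R] {A : Matrix n n R} (h : A.rank < Fintype.card n) : A.det = 0 :=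
  by_contra fun hA => h.ne (rank_of_det_ne_zero hA)

theorem Matrix.fin_two_mem_unitaryGroup {R : Type*} [CommRing R] [StarRing R] {α β : R}
    (h : star α * α + star β * β = 1) :
    !![α, β; -star β, star α] ∈ unitaryGroup (Fin 2) R := by
  rw [mem_unitaryGroup_iff']
  ext i j
  fin_cases i <;> fin_cases j <;> simp [mul_apply, Fin.sum_univ_two] <;> grind

theorem Matrix.fin_two_entries_of_det_eq_zero_of_det_sub_eq_zero {R : Type*} [CommRing R]
    {A : Matrix (Fin 2) (Fin 2) R} {x : R} (hA : A.det = 0) (hB : (!![1, 0; 0, x] - A).det = 0) :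
    A 1 1 = x * (1 - A 0 0) ∧ A 0 1 * A 1 0 = x * A 0 0 * (1 - A 0 0) := by
  rw [det_fin_two] at hA hB
  simp only [sub_apply, of_apply, cons_val', cons_val_zero, cons_val_one, empty_val',
    cons_val_fin_one] at hB
  constructor
  · linear_combination hA - hB
  · linear_combination (A 0 0 - 1) * hA - A 0 0 * hB

theorem Complex.exists_normSq_eq_and_mul_eq {r t : ℝ} (ht : 0 ≤ t) {c : ℂ}
    (hc : normSq c = r ^ 2 * t) : ∃ z : ℂ, normSq z = t ∧ r * z = c := by
  rcases eq_or_ne r 0 with rfl | hr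
  · refine ⟨√t, by simp [ht], ?_⟩
    rw [(by simpa using hc : c = 0)]
    simp
  · refine ⟨c / r, ?_, by field_simp⟩
    rw [map_div₀, normSq_ofReal, hc]
    field_simp

theorem rank_one_decomposition_of_diag_general
    (x : ℝ) (hx0 : 0 ≤ x)
    (A B : Matrix (Fin 2) (Fin 2) ℂ)
    (hA : A.PosSemidef) (hB : B.PosSemidef)
    (hAB : A + B = !![1, 0; 0, (x : ℂ)])
    (hrA : A.rank ≤ 1) (hrB : B.rank ≤ 1) :
    ∃ U : Matrix (Fin 2) (Fin 2) ℂ, U ∈ Matrix.unitaryGroup (Fin 2) ℂ ∧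
      A = !![star (U 0 0) * U 0 0, (Real.sqrt x : ℂ) * star (U 0 0) * U 0 1;
             (Real.sqrt x : ℂ) * U 0 0 * star (U 0 1), (x : ℂ) * (star (U 0 1) * U 0 1)] ∧
      B = !![star (U 1 0) * U 1 0, (Real.sqrt x : ℂ) * star (U 1 0) * U 1 1;
             (Real.sqrt x : ℂ) * U 1 0 * star (U 1 1), (x : ℂ) * (star (U 1 1) * U 1 1)] := by
  obtain rfl : B = !![1, 0; 0, (x : ℂ)] - A := eq_sub_of_add_eq' hAB
  obtain ⟨hA11, hA01⟩ := fin_two_entries_of_det_eq_zero_of_det_sub_eq_zero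
    (det_eq_zero_of_rank_lt (hrA.trans_lt (by simp)))
    (det_eq_zero_of_rank_lt (hrB.trans_lt (by simp)))
  obtain ⟨a, ha0, hA00⟩ := RCLike.nonneg_iff_exists_ofReal.mp (hA.diag_nonneg (i := 0))
  replace hA00 : A 0 0 = a := hA00.symm
  rw [hA00] at hA11 hA01
  have hA10 : A 1 0 = star (A 0 1) := (hA.1.apply 1 0).symm
  have ha1 : 0 ≤ 1 - a := by
    simpa [hA00, ← Complex.ofReal_one, ← Complex.ofReal_sub] using hB.diag_nonneg (i := 0)
  have hc : (Complex.normSq (A 0 1) : ℂ) = x * a * (1 - a) := by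
    rw [← Complex.mul_conj, ← Complex.star_def, ← hA10, hA01]
  obtain ⟨z, hz, hzc⟩ := Complex.exists_normSq_eq_and_mul_eq (r := √x * √a) ha1
    (by rw [mul_pow, Real.sq_sqrt hx0, Real.sq_sqrt ha0]; exact_mod_cast hc)
  push_cast at hzc
  have hzc' : √x * √a * (starRingEnd ℂ) z = A 1 0 := by rw [hA10, ← hzc]; simp
  have hs : (√a : ℂ) * √a = a := mod_cast Real.mul_self_sqrt ha0
  have hzz : (starRingEnd ℂ) z * z = 1 - a := by
    rw [← Complex.normSq_eq_conj_mul_self, hz]; push_cast; rfl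
  refine ⟨!![(√a : ℂ), z; -star z, star (√a : ℂ)], fin_two_mem_unitaryGroup ?_, ?_, ?_⟩
  · simp [hs, hzz]
  · ext i j
    fin_cases i <;> fin_cases j <;> simp [hA00, hA11, ← hzc, ← hzc', hs, hzz]
  · ext i j
    fin_cases i <;> fin_cases j <;> simp [hA00, hA11, ← hzc, ← hzc', hs]
    · linear_combination -hzz
    all_goals ring

/-- **The polarimeter decomposition.** Every decomposition of `diag(1, x)` (with
`x ∈ [0,1]`) into two positive semidefinite matrices of rank at most one arises
from a unitary `U` via the measurement-operator forms `π₀, π₁` of the variational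
triangular polarimeter. -/
theorem rank_one_decomposition_of_diag
    (x : ℝ) (hx0 : 0 ≤ x) (hx1 : x ≤ 1)
    (A B : Matrix (Fin 2) (Fin 2) ℂ)
    (hA : A.PosSemidef) (hB : B.PosSemidef)
    (hAB : A + B = !![1, 0; 0, (x : ℂ)])
    (hrA : A.rank ≤ 1) (hrB : B.rank ≤ 1) :
    ∃ U : Matrix (Fin 2) (Fin 2) ℂ, U ∈ Matrix.unitaryGroup (Fin 2) ℂ ∧
      A = !![star (U 0 0) * U 0 0, (Real.sqrt x : ℂ) * star (U 0 0) * U 0 1;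
             (Real.sqrt x : ℂ) * U 0 0 * star (U 0 1), (x : ℂ) * (star (U 0 1) * U 0 1)] ∧
      B = !![star (U 1 0) * U 1 0, (Real.sqrt x : ℂ) * star (U 1 0) * U 1 1;
             (Real.sqrt x : ℂ) * U 1 0 * star (U 1 1), (x : ℂ) * (star (U 1 1) * U 1 1)] :=
  rank_one_decomposition_of_diag_general x hx0 A B hA hB hAB hrA hrB
end

section
/- Let Π₀, Π₁, Π₂ be 2×2 Hermitian positive semidefinite complex matrices with Π₀ + Π₁ + Π₂ = I and rank Π_i ≤ 1 for each i. Then there exist x ∈ [0,1] and 2×2 unitary matrices U and W such that Π₂ = (1 − x)·W* diag(0,1) W, Π₀ = W* π₀ W, and Π₁ = W* π₁ W, where π₀ = [[|u₀₀|², √x·conj(u₀₀)·u₀₁], [√x·u₀₀·conj(u₀₁), x·|u₀₁|²]] and π₁ = [[|u₁₀|², √x·conj(u₁₀)·u₁₁], [√x·u₁₀·conj(u₁₁), x·|u₁₁|²]] with (u_{jk}) the entries of U. -/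
open Matrix ComplexOrder

/-!
Write each `Pᵢ = vᵢ vᵢᴴ`. A unitary `W` sending `v₂` to `(0, c)` with `c` real turns `P₂` into
`diag(0, c²)`, so with `a = W v₀`, `b = W v₁` we get `a aᴴ + b bᴴ = diag(1, x)` for `x = 1 - c²`.
The matrix `M` with rows `aᴴ, bᴴ` then satisfies `Mᴴ M = diag(1, x)`, hence `M = U diag(1, √x)`
with `U` unitary, and `πᵢ = (M i)ᴴ (M i)` is `W Pᵢ Wᴴ`.
-/

namespace Matrix

theorem PosSemidef.exists_eq_vecMulVec_star_of_rank_le_one {n 𝕜 : Type*} [Fintype n] [RCLike 𝕜]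
    {A : Matrix n n 𝕜} (hA : A.PosSemidef) (hr : A.rank ≤ 1) :
    ∃ v : n → 𝕜, A = vecMulVec v (star v) := by
  classical
  set ev := hA.1.eigenvalues
  have hzero : ∀ i j, i ≠ j → ev i = 0 ∨ ev j = 0 := by
    intro i j hij
    by_contra! h
    rw [hA.1.rank_eq_card_non_zero_eigs, Fintype.card_le_one_iff] at hr
    exact hij (congrArg Subtype.val (hr ⟨i, h.1⟩ ⟨j, h.2⟩))
  set s : n → 𝕜 := fun i => (Real.sqrt (ev i) : 𝕜)
  have hdiag : diagonal (RCLike.ofReal ∘ ev) = vecMulVec s (star s) := by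
    ext i j
    rcases eq_or_ne i j with rfl | hij
    · simp only [s, diagonal_apply_eq, vecMulVec_apply, Pi.star_apply, RCLike.star_def,
        RCLike.conj_ofReal, Function.comp_apply, ← RCLike.ofReal_mul]
      rw [Real.mul_self_sqrt (hA.eigenvalues_nonneg i)]
    · rcases hzero i j hij with h | h <;> simp [s, vecMulVec_apply, diagonal_apply_ne _ hij, h]
  refine ⟨hA.1.eigenvectorUnitary *ᵥ s, ?_⟩
  conv_lhs => rw [hA.1.spectral_theorem, hdiag]
  rw [Unitary.conjStarAlgAut_apply, mul_vecMulVec, vecMulVec_mul, star_mulVec,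
    star_eq_conjTranspose]

theorem mul_vecMulVec_star_mul_conjTranspose {m n R : Type*} [Fintype n] [CommSemiring R]
    [StarRing R] (W : Matrix m n R) (v : n → R) :
    W * vecMulVec v (star v) * Wᴴ = vecMulVec (W *ᵥ v) (star (W *ᵥ v)) := by
  rw [mul_vecMulVec, vecMulVec_mul, star_mulVec]

theorem eq_conjTranspose_mul_mul_iff {n R : Type*} [Fintype n] [DecidableEq n] [CommRing R]
    [StarRing R] {W : Matrix n n R} (hW : W ∈ unitaryGroup n R) {P Q : Matrix n n R} :
    P = Wᴴ * Q * W ↔ W * P * Wᴴ = Q := by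
  have h₁ : W * Wᴴ = 1 := mem_unitaryGroup_iff.mp hW
  have h₂ : Wᴴ * W = 1 := mem_unitaryGroup_iff'.mp hW
  constructor
  · rintro rfl
    simp only [← mul_assoc, h₁, one_mul]
    simp only [mul_assoc, h₁, mul_one]
  · rintro rfl
    simp only [← mul_assoc, h₂, one_mul]
    simp only [mul_assoc, h₂, mul_one]

def cayleyKlein {R : Type*} [Neg R] [Star R] (a b : R) : Matrix (Fin 2) (Fin 2) R :=
  !![a, -star b; b, star a]

theorem cayleyKlein_mem_unitaryGroup {R : Type*} [CommRing R] [StarRing R] {a b : R}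
    (h : star a * a + star b * b = 1) : cayleyKlein a b ∈ unitaryGroup (Fin 2) R := by
  rw [mem_unitaryGroup_iff']
  ext i j
  fin_cases i <;> fin_cases j <;> simp [cayleyKlein, mul_apply] <;>
    first | ring1 | linear_combination h

theorem exists_unitary_mulVec_eq_ofReal (v : Fin 2 → ℂ) :
    ∃ W ∈ unitaryGroup (Fin 2) ℂ, ∃ c : ℝ, W *ᵥ v = ![0, (c : ℂ)] := by
  set c := √(Complex.normSq (v 0) + Complex.normSq (v 1))
  have hc : star v ⬝ᵥ v = (c : ℂ) * c := by
    rw [← Complex.ofReal_mul,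
      Real.mul_self_sqrt (add_nonneg (Complex.normSq_nonneg _) (Complex.normSq_nonneg _))]
    push_cast [Complex.normSq_eq_conj_mul_self]
    simp [dotProduct, Fin.sum_univ_two]
  rcases eq_or_ne (c : ℂ) 0 with hc0 | hc0
  · refine ⟨1, one_mem _, 0, ?_⟩
    have hv : v = 0 := dotProduct_star_self_eq_zero.mp (by rw [hc, hc0, zero_mul])
    ext i
    fin_cases i <;> simp [hv]
  simp only [dotProduct, Fin.sum_univ_two, Pi.star_apply, Complex.star_def] at hc
  refine ⟨cayleyKlein (v 1 / c) (star (v 0) / c), cayleyKlein_mem_unitaryGroup ?_, c, ?_⟩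
  · simp only [star_div₀, Complex.star_def, Complex.conj_ofReal, Complex.conj_conj]
    field_simp
    linear_combination hc
  · ext i
    fin_cases i <;> simp [cayleyKlein, mulVec, dotProduct]
    · ring
    · field_simp
      linear_combination hc

theorem exists_unitary_eq_mul_diagonal_sqrt {M : Matrix (Fin 2) (Fin 2) ℂ} {x : ℝ}
    (h : Mᴴ * M = diagonal ![1, (x : ℂ)]) :
    0 ≤ x ∧ ∃ U ∈ unitaryGroup (Fin 2) ℂ, M = U * diagonal ![1, (√x : ℂ)] := by
  have hentry : ∀ i, (Mᴴ * M) i i = star (M.col i) ⬝ᵥ M.col i := fun _ => rfl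
  have h00 : star (M.col 0) ⬝ᵥ M.col 0 = 1 := by simpa [hentry] using congrFun (congrFun h 0) 0
  have h11 : star (M.col 1) ⬝ᵥ M.col 1 = x := by simpa [hentry] using congrFun (congrFun h 1) 1
  have hx : 0 ≤ x := by
    have := (posSemidef_conjTranspose_mul_self M).diag_nonneg (i := 1)
    rwa [h, diagonal_apply_eq, cons_val_one, cons_val_zero, Complex.zero_le_real] at this
  refine ⟨hx, ?_⟩
  rcases hx.eq_or_lt with rfl | hxpos
  · have hcol : ∀ i, M i 1 = 0 :=
      congrFun (dotProduct_star_self_eq_zero.mp (by simpa using h11))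
    refine ⟨cayleyKlein (M 0 0) (M 1 0), cayleyKlein_mem_unitaryGroup ?_, ?_⟩
    · simpa [dotProduct, Fin.sum_univ_two] using h00
    · ext i j
      fin_cases i <;> fin_cases j <;> simp [cayleyKlein, hcol]
  have hsqrt : (√x : ℂ) ≠ 0 := by exact_mod_cast (Real.sqrt_pos.mpr hxpos).ne'
  refine ⟨M * diagonal ![1, (√x : ℂ)⁻¹], ?_, ?_⟩
  · rw [mem_unitaryGroup_iff', star_eq_conjTranspose, conjTranspose_mul, diagonal_conjTranspose,
      mul_assoc, ← mul_assoc Mᴴ, h, diagonal_mul_diagonal, diagonal_mul_diagonal, ← diagonal_one]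
    congr 1
    ext i
    fin_cases i <;> simp
    field_simp
    exact_mod_cast (Real.sq_sqrt hx).symm
  · rw [mul_assoc, diagonal_mul_diagonal]
    conv_lhs => rw [← mul_one M, ← diagonal_one]
    congr 2
    ext i
    fin_cases i <;> simp [hsqrt]

end Matrix

/-- The operator `πᵢ` of the polarimeter, where `u` is the `i`-th row of `U`. -/
noncomputable def polarimeterElement (x : ℝ) (u : Fin 2 → ℂ) : Matrix (Fin 2) (Fin 2) ℂ :=
  !![star (u 0) * u 0, (Real.sqrt x : ℂ) * star (u 0) * u 1;
     (Real.sqrt x : ℂ) * u 0 * star (u 1), (x : ℂ) * (star (u 1) * u 1)]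

theorem polarimeterElement_eq_vecMulVec_star_row {x : ℝ} (hx : 0 ≤ x)
    (U : Matrix (Fin 2) (Fin 2) ℂ) (i : Fin 2) :
    polarimeterElement x (U i) =
      vecMulVec (star ((U * diagonal ![1, (√x : ℂ)]) i)) ((U * diagonal ![1, (√x : ℂ)]) i) := by
  have hsq : (√x : ℂ) * √x = x := by exact_mod_cast Real.mul_self_sqrt hx
  ext j k
  fin_cases j <;> fin_cases k <;> simp [polarimeterElement, vecMulVec_apply] <;>
    first | ring1 | linear_combination -(starRingEnd ℂ (U i 1) * U i 1) * hsq

theorem exists_polarimeter_of_add_vecMulVec_eq_diagonal {a b : Fin 2 → ℂ} {x : ℝ}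
    (h : vecMulVec a (star a) + vecMulVec b (star b) = diagonal ![1, (x : ℂ)]) :
    0 ≤ x ∧ ∃ U ∈ unitaryGroup (Fin 2) ℂ,
      vecMulVec a (star a) = polarimeterElement x (U 0) ∧
      vecMulVec b (star b) = polarimeterElement x (U 1) := by
  set M : Matrix (Fin 2) (Fin 2) ℂ := of ![star a, star b]
  have hM : Mᴴ * M = vecMulVec a (star a) + vecMulVec b (star b) := by
    ext j k
    simp [M, mul_apply, vecMulVec_apply, Fin.sum_univ_two]
  obtain ⟨hx, U, hU, hMU⟩ := exists_unitary_eq_mul_diagonal_sqrt (hM.trans h)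
  refine ⟨hx, U, hU, ?_, ?_⟩
  · rw [polarimeterElement_eq_vecMulVec_star_row hx, ← hMU, show M 0 = star a from rfl, star_star]
  · rw [polarimeterElement_eq_vecMulVec_star_row hx, ← hMU, show M 1 = star b from rfl, star_star]

/-- **Arbitrary rank-one 3-element qubit POVM via the polarimeter.** Every 3-element
POVM `{P₀, P₁, P₂}` on a qubit with each element of rank at most one is realized by the
variational triangular polarimeter: a PPBS with vertical-polarization transmission `x`,
a unitary `U` on the transmission path, conjugated by an input unitary `W`. -/
theorem polarimeter_realizes_rank_one_povm
    (P₀ P₁ P₂ : Matrix (Fin 2) (Fin 2) ℂ)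
    (h0 : P₀.PosSemidef) (h1 : P₁.PosSemidef) (h2 : P₂.PosSemidef)
    (hsum : P₀ + P₁ + P₂ = 1)
    (hr0 : P₀.rank ≤ 1) (hr1 : P₁.rank ≤ 1) (hr2 : P₂.rank ≤ 1) :
    ∃ (x : ℝ) (U W : Matrix (Fin 2) (Fin 2) ℂ), 0 ≤ x ∧ x ≤ 1 ∧
      U ∈ Matrix.unitaryGroup (Fin 2) ℂ ∧ W ∈ Matrix.unitaryGroup (Fin 2) ℂ ∧
      P₂ = ((1 - x : ℝ) : ℂ) • (Wᴴ * !![0, 0; 0, 1] * W) ∧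
      P₀ = Wᴴ *
        !![star (U 0 0) * U 0 0, (Real.sqrt x : ℂ) * star (U 0 0) * U 0 1;
           (Real.sqrt x : ℂ) * U 0 0 * star (U 0 1), (x : ℂ) * (star (U 0 1) * U 0 1)] * W ∧
      P₁ = Wᴴ *
        !![star (U 1 0) * U 1 0, (Real.sqrt x : ℂ) * star (U 1 0) * U 1 1;
           (Real.sqrt x : ℂ) * U 1 0 * star (U 1 1), (x : ℂ) * (star (U 1 1) * U 1 1)] * W := by
  obtain ⟨v₀, rfl⟩ := h0.exists_eq_vecMulVec_star_of_rank_le_one hr0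
  obtain ⟨v₁, rfl⟩ := h1.exists_eq_vecMulVec_star_of_rank_le_one hr1
  obtain ⟨v₂, rfl⟩ := h2.exists_eq_vecMulVec_star_of_rank_le_one hr2
  obtain ⟨W, hW, c, hWv⟩ := exists_unitary_mulVec_eq_ofReal v₂
  have hP₂ : W * vecMulVec v₂ (star v₂) * Wᴴ = diagonal ![0, ((c ^ 2 : ℝ) : ℂ)] := by
    rw [mul_vecMulVec_star_mul_conjTranspose, hWv]
    ext i j
    fin_cases i <;> fin_cases j <;> simp [sq]
  have hsum' : W * vecMulVec v₀ (star v₀) * Wᴴ + W * vecMulVec v₁ (star v₁) * Wᴴ +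
      diagonal ![0, ((c ^ 2 : ℝ) : ℂ)] = 1 := by
    rw [← hP₂, ← Matrix.add_mul, ← Matrix.add_mul, ← Matrix.mul_add, ← Matrix.mul_add, hsum,
      mul_one, ← star_eq_conjTranspose, ← mem_unitaryGroup_iff.mp hW]
  have hdiag : vecMulVec (W *ᵥ v₀) (star (W *ᵥ v₀)) + vecMulVec (W *ᵥ v₁) (star (W *ᵥ v₁)) =
      diagonal ![1, ((1 - c ^ 2 : ℝ) : ℂ)] := by
    rw [← mul_vecMulVec_star_mul_conjTranspose, ← mul_vecMulVec_star_mul_conjTranspose,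
      eq_sub_of_add_eq hsum']
    ext i j
    fin_cases i <;> fin_cases j <;> simp
  obtain ⟨hx, U, hU, h₀, h₁⟩ := exists_polarimeter_of_add_vecMulVec_eq_diagonal hdiag
  refine ⟨1 - c ^ 2, U, W, hx, by linarith [sq_nonneg c], hU, hW, ?_, ?_, ?_⟩
  · rw [← Matrix.smul_mul, ← Matrix.mul_smul, eq_conjTranspose_mul_mul_iff hW, hP₂]
    ext i j
    fin_cases i <;> fin_cases j <;> simp
  · exact (eq_conjTranspose_mul_mul_iff hW).mpr
      ((mul_vecMulVec_star_mul_conjTranspose W v₀).trans h₀)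
  · exact (eq_conjTranspose_mul_mul_iff hW).mpr
      ((mul_vecMulVec_star_mul_conjTranspose W v₁).trans h₁)
end
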